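/- arXiv:2309.12093 — 6 statements merged into one kernel-verified Lean document; each statement's English description precedes it below -/
import Mathlib

section
/- Let M and M' be left module categories over a monoidal category V and let F : M → M' be a module functor. Then the following are equivalent: (i) F is an equivalence of module categories, i.e. there exist a module functor G : M' → M and module natural isomorphisms η : Id_M ≅ G∘F and ε : F∘G ≅ Id_{M'}; (ii) F is part of an adjoint equivalence of module categories (such G, η, ε additionally satisfying the zig-zag identities); (iii) the underlying functor of F is an equivalence of ordinary categories. -/
open CategoryTheory MonoidalCategory Category

universe v₁ v₂ v₃ v₄ u₁ u₂ u₃ u₄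

namespace ModMonPaper

/-! ### Strong monoidal functors as data plus property -/

section MonFunctor

variable (V : Type u₁) [Category.{v₁} V] [MonoidalCategory V]
variable (W : Type u₂) [Category.{v₂} W] [MonoidalCategory W]
variable (X : Type u₃) [Category.{v₃} X] [MonoidalCategory X]

/-- The data of a (strong) monoidal functor: a functor together with the
coherence isomorphisms `φ₂` and `φ₀`. -/
structure MonFunctorData where
  F : V ⥤ W
  φ₂ : ∀ x y : V, F.obj x ⊗ F.obj y ≅ F.obj (x ⊗ y)
  φ₀ : 𝟙_ W ≅ F.obj (𝟙_ V)

variable {V W X}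

/-- The axioms of a (strong) monoidal functor. -/
structure MonFunctorData.IsMonFunctor (D : MonFunctorData V W) : Prop where
  φ₂_natural : ∀ {x y x' y' : V} (f : x ⟶ x') (g : y ⟶ y'),
    (D.F.map f ⊗ₘ D.F.map g) ≫ (D.φ₂ x' y').hom = (D.φ₂ x y).hom ≫ D.F.map (f ⊗ₘ g)
  hexagon : ∀ x y z : V,
    ((D.φ₂ x y).hom ⊗ₘ 𝟙 (D.F.obj z)) ≫ (D.φ₂ (x ⊗ y) z).hom ≫ D.F.map (α_ x y z).hom =
      (α_ (D.F.obj x) (D.F.obj y) (D.F.obj z)).hom ≫ (𝟙 (D.F.obj x) ⊗ₘ (D.φ₂ y z).hom) ≫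
        (D.φ₂ x (y ⊗ z)).hom
  φ₀_left : ∀ x : V,
    (D.φ₀.hom ⊗ₘ 𝟙 (D.F.obj x)) ≫ (D.φ₂ (𝟙_ V) x).hom ≫ D.F.map (λ_ x).hom =
      (λ_ (D.F.obj x)).hom
  φ₀_right : ∀ x : V,
    (𝟙 (D.F.obj x) ⊗ₘ D.φ₀.hom) ≫ (D.φ₂ x (𝟙_ V)).hom ≫ D.F.map (ρ_ x).hom =
      (ρ_ (D.F.obj x)).hom

variable (V) in
/-- The identity monoidal functor data. -/
def MonFunctorData.id : MonFunctorData V V :=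
  ⟨𝟭 V, fun x y => Iso.refl (x ⊗ y), Iso.refl (𝟙_ V)⟩

/-- Composition of monoidal functor data. -/
def MonFunctorData.comp (D : MonFunctorData V W) (E : MonFunctorData W X) :
    MonFunctorData V X :=
  ⟨D.F ⋙ E.F, fun x y => E.φ₂ (D.F.obj x) (D.F.obj y) ≪≫ E.F.mapIso (D.φ₂ x y),
    E.φ₀ ≪≫ E.F.mapIso D.φ₀⟩

/-- A natural transformation between (strong) monoidal functors is monoidal if it is
compatible with `φ₂` and `φ₀`. -/
def IsMonNT (D E : MonFunctorData V W) (τ : D.F ⟶ E.F) : Prop :=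
  (∀ x y : V, (D.φ₂ x y).hom ≫ τ.app (x ⊗ y) = (τ.app x ⊗ₘ τ.app y) ≫ (E.φ₂ x y).hom) ∧
    D.φ₀.hom ≫ τ.app (𝟙_ V) = E.φ₀.hom

/-- A braided monoidal functor: a monoidal functor compatible with the braidings. -/
def MonFunctorData.IsBraidedFunctor [BraidedCategory V] [BraidedCategory W]
    (D : MonFunctorData V W) : Prop :=
  D.IsMonFunctor ∧
    ∀ x y : V, (D.φ₂ x y).hom ≫ D.F.map (β_ x y).hom =
      (β_ (D.F.obj x) (D.F.obj y)).hom ≫ (D.φ₂ y x).hom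

end MonFunctor

/-! ### Module categories -/

section ModuleCat

variable (V : Type u₁) [Category.{v₁} V] [MonoidalCategory V]
variable (M : Type u₂) [Category.{v₂} M]
variable (M' : Type u₃) [Category.{v₃} M']

/-- The data of a left `V`-module category structure on `M`. -/
structure ModuleData where
  act : V → M → M
  actMap : ∀ {v w : V} {x y : M}, (v ⟶ w) → (x ⟶ y) → (act v x ⟶ act w y)
  massoc : ∀ (v w : V) (x : M), act (v ⊗ w) x ≅ act v (act w x)
  munit : ∀ x : M, act (𝟙_ V) x ≅ x

variable {V M M'}

/-- The axioms of a left module category. -/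
structure ModuleData.IsModule (P : ModuleData V M) : Prop where
  actMap_id : ∀ (v : V) (x : M), P.actMap (𝟙 v) (𝟙 x) = 𝟙 (P.act v x)
  actMap_comp : ∀ {v w u : V} {x y z : M} (f : v ⟶ w) (g : w ⟶ u) (h : x ⟶ y) (k : y ⟶ z),
    P.actMap (f ≫ g) (h ≫ k) = P.actMap f h ≫ P.actMap g k
  massoc_natural : ∀ {v v' w w' : V} {x x' : M} (f : v ⟶ v') (g : w ⟶ w') (h : x ⟶ x'),
    P.actMap (f ⊗ₘ g) h ≫ (P.massoc v' w' x').hom =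
      (P.massoc v w x).hom ≫ P.actMap f (P.actMap g h)
  munit_natural : ∀ {x x' : M} (h : x ⟶ x'),
    P.actMap (𝟙 (𝟙_ V)) h ≫ (P.munit x').hom = (P.munit x).hom ≫ h
  pentagon : ∀ (u v w : V) (x : M),
    P.actMap (α_ u v w).hom (𝟙 x) ≫ (P.massoc u (v ⊗ w) x).hom ≫
        P.actMap (𝟙 u) (P.massoc v w x).hom =
      (P.massoc (u ⊗ v) w x).hom ≫ (P.massoc u v (P.act w x)).hom
  triangle : ∀ (v : V) (x : M),
    (P.massoc v (𝟙_ V) x).hom ≫ P.actMap (𝟙 v) (P.munit x).hom = P.actMap (ρ_ v).hom (𝟙 x)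

/-- Acting with a fixed object of `V` on an isomorphism of `M`. -/
def ModuleData.actIso (P : ModuleData V M)
    (hid : ∀ (v : V) (x : M), P.actMap (𝟙 v) (𝟙 x) = 𝟙 (P.act v x))
    (hcomp : ∀ {v w u : V} {x y z : M} (f : v ⟶ w) (g : w ⟶ u) (h : x ⟶ y) (k : y ⟶ z),
      P.actMap (f ≫ g) (h ≫ k) = P.actMap f h ≫ P.actMap g k)
    (v : V) {x y : M} (e : x ≅ y) : P.act v x ≅ P.act v y where
  hom := P.actMap (𝟙 v) e.hom
  inv := P.actMap (𝟙 v) e.inv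
  hom_inv_id := by rw [← hcomp]; simp [hid]
  inv_hom_id := by rw [← hcomp]; simp [hid]

/-- The data of a module functor. -/
structure ModuleFunctorData (P : ModuleData V M) (P' : ModuleData V M') where
  F : M ⥤ M'
  s : ∀ (v : V) (x : M), P'.act v (F.obj x) ≅ F.obj (P.act v x)

/-- The axioms of a module functor. -/
structure ModuleFunctorData.IsModuleFunctor {P : ModuleData V M} {P' : ModuleData V M'}
    (D : ModuleFunctorData P P') : Prop where
  s_natural : ∀ {v w : V} {x y : M} (f : v ⟶ w) (g : x ⟶ y),
    P'.actMap f (D.F.map g) ≫ (D.s w y).hom = (D.s v x).hom ≫ D.F.map (P.actMap f g)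
  pentagon : ∀ (v w : V) (x : M),
    (D.s (v ⊗ w) x).hom ≫ D.F.map (P.massoc v w x).hom =
      (P'.massoc v w (D.F.obj x)).hom ≫ P'.actMap (𝟙 v) (D.s w x).hom ≫
        (D.s v (P.act w x)).hom
  triangle : ∀ x : M,
    (D.s (𝟙_ V) x).hom ≫ D.F.map (P.munit x).hom = (P'.munit (D.F.obj x)).hom

/-- The identity module functor data. -/
def ModuleFunctorData.id (P : ModuleData V M) : ModuleFunctorData P P :=
  ⟨𝟭 M, fun v x => Iso.refl (P.act v x)⟩

/-- Composition of module functor data. -/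
def ModuleFunctorData.comp {M'' : Type u₄} [Category.{v₄} M''] {P : ModuleData V M}
    {P' : ModuleData V M'} {P'' : ModuleData V M''}
    (D : ModuleFunctorData P P') (E : ModuleFunctorData P' P'') :
    ModuleFunctorData P P'' :=
  ⟨D.F ⋙ E.F, fun v x => E.s v (D.F.obj x) ≪≫ E.F.mapIso (D.s v x)⟩

/-- Module natural transformations. -/
def IsModuleNT {P : ModuleData V M} {P' : ModuleData V M'}
    (D E : ModuleFunctorData P P') (τ : D.F ⟶ E.F) : Prop :=
  ∀ (v : V) (x : M),
    (D.s v x).hom ≫ τ.app (P.act v x) = P'.actMap (𝟙 v) (τ.app x) ≫ (E.s v x).hom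

end ModuleCat

end ModMonPaper
namespace ModMonPaper

section Stmt3

variable {V : Type u₁} [Category.{v₁} V] [MonoidalCategory V]
variable {M : Type u₂} [Category.{v₂} M]
variable {M' : Type u₃} [Category.{v₃} M']

/-! Only (iii) ⇒ (ii) needs an argument. An equivalence `F` is part of an adjunction `F ⊣ G`
with invertible unit `η` and counit `ε`, and `G` becomes a module functor through the mate of the
structure isomorphisms `s` of `F`: the map `v ▷ G y ⟶ G (v ▷ y)` adjunct to
`s⁻¹ ≫ v ▷ ε_y : F (v ▷ G y) ⟶ v ▷ y`. A map into `G y` is determined by its adjunct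
`F f ≫ ε_y`, so each coherence axiom for `G`, as well as the module naturality of `η` and `ε`,
follows from the corresponding axiom for `F` after applying `F` and composing with `ε`. -/

theorem _root_.CategoryTheory.Adjunction.eq_of_map_comp_counit {C D : Type*} [Category C]
    [Category D] {F : C ⥤ D} {G : D ⥤ C} (adj : F ⊣ G) {x : C} {y : D} {f g : x ⟶ G.obj y}
    (h : F.map f ≫ adj.counit.app y = F.map g ≫ adj.counit.app y) : f = g :=
  (adj.homEquiv x y).symm.injective (by simpa only [Adjunction.homEquiv_counit] using h)

namespace ModuleData.IsModule

variable {P : ModuleData V M}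

theorem actMap_comp_actMap_id (hP : P.IsModule) {v w : V} (f : v ⟶ w) {x y z : M}
    (a : x ⟶ y) (b : y ⟶ z) : P.actMap f a ≫ P.actMap (𝟙 w) b = P.actMap f (a ≫ b) := by
  rw [← hP.actMap_comp, comp_id]

theorem actMap_id_comp_actMap (hP : P.IsModule) {v w : V} (f : v ⟶ w) {x y z : M}
    (a : x ⟶ y) (b : y ⟶ z) : P.actMap (𝟙 v) a ≫ P.actMap f b = P.actMap f (a ≫ b) := by
  rw [← hP.actMap_comp, id_comp]

end ModuleData.IsModule

namespace ModuleFunctorData.IsModuleFunctor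

variable {P : ModuleData V M} {P' : ModuleData V M'} {D : ModuleFunctorData P P'}

theorem map_actMap_comp_s_inv (hD : D.IsModuleFunctor) {v w : V} {x y : M} (f : v ⟶ w)
    (g : x ⟶ y) :
    D.F.map (P.actMap f g) ≫ (D.s w y).inv = (D.s v x).inv ≫ P'.actMap f (D.F.map g) := by
  rw [Iso.comp_inv_eq, assoc, hD.s_natural, Iso.inv_hom_id_assoc]

theorem map_massoc_comp_s_inv (hP' : P'.IsModule) (hD : D.IsModuleFunctor) (v w : V) (x : M) :
    D.F.map (P.massoc v w x).hom ≫ (D.s v (P.act w x)).inv ≫ P'.actMap (𝟙 v) (D.s w x).inv =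
      (D.s (v ⊗ w) x).inv ≫ (P'.massoc v w (D.F.obj x)).hom := by
  rw [Iso.eq_inv_comp, reassoc_of% hD.pentagon, Iso.hom_inv_id_assoc,
    hP'.actMap_comp_actMap_id, Iso.hom_inv_id, hP'.actMap_id, comp_id]

theorem s_inv_comp_munit (hD : D.IsModuleFunctor) (x : M) :
    (D.s (𝟙_ V) x).inv ≫ (P'.munit (D.F.obj x)).hom = D.F.map (P.munit x).hom := by
  rw [Iso.inv_comp_eq, hD.triangle]

end ModuleFunctorData.IsModuleFunctor

namespace ModuleFunctorData

variable {P : ModuleData V M} {P' : ModuleData V M'} (hP' : P'.IsModule)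
  (D : ModuleFunctorData P P') {G : M' ⥤ M} (adj : D.F ⊣ G) [IsIso adj.unit] [IsIso adj.counit]

noncomputable def rightAdjointS (v : V) (y : M') : P.act v (G.obj y) ≅ G.obj (P'.act v y) :=
  asIso (adj.unit.app (P.act v (G.obj y))) ≪≫
    G.mapIso ((D.s v (G.obj y)).symm ≪≫
      P'.actIso hP'.actMap_id hP'.actMap_comp v (asIso (adj.counit.app y)))

noncomputable def rightAdjoint : ModuleFunctorData P' P :=
  ⟨G, D.rightAdjointS hP' adj⟩

theorem map_rightAdjointS_hom_comp_counit (v : V) (y : M') :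
    D.F.map (D.rightAdjointS hP' adj v y).hom ≫ adj.counit.app (P'.act v y) =
      (D.s v (G.obj y)).inv ≫ P'.actMap (𝟙 v) (adj.counit.app y) := by
  simp [rightAdjointS, ModuleData.actIso]

variable {D}

theorem rightAdjointS_natural (hD : D.IsModuleFunctor) {v w : V} {x y : M'} (f : v ⟶ w)
    (g : x ⟶ y) :
    P.actMap f (G.map g) ≫ (D.rightAdjointS hP' adj w y).hom =
      (D.rightAdjointS hP' adj v x).hom ≫ G.map (P'.actMap f g) := by
  apply adj.eq_of_map_comp_counit
  have hmate := D.map_rightAdjointS_hom_comp_counit hP' adj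
  trans (D.s v (G.obj x)).inv ≫ P'.actMap f (adj.counit.app x ≫ g)
  · rw [Functor.map_comp, assoc, hmate, ← assoc, hD.map_actMap_comp_s_inv, assoc,
      hP'.actMap_comp_actMap_id, adj.counit_naturality g]
  · rw [Functor.map_comp, assoc, adj.counit_naturality (P'.actMap f g), reassoc_of% hmate,
      hP'.actMap_id_comp_actMap]

theorem rightAdjointS_pentagon (hD : D.IsModuleFunctor) (v w : V) (y : M') :
    (D.rightAdjointS hP' adj (v ⊗ w) y).hom ≫ G.map (P'.massoc v w y).hom =
      (P.massoc v w (G.obj y)).hom ≫ P.actMap (𝟙 v) (D.rightAdjointS hP' adj w y).hom ≫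
        (D.rightAdjointS hP' adj v (P'.act w y)).hom := by
  apply adj.eq_of_map_comp_counit
  have hmate := D.map_rightAdjointS_hom_comp_counit hP' adj
  have hcounit : P'.actMap (𝟙 (v ⊗ w)) (adj.counit.app y) ≫ (P'.massoc v w y).hom =
      (P'.massoc v w (D.F.obj (G.obj y))).hom ≫
        P'.actMap (𝟙 v) (P'.actMap (𝟙 w) (adj.counit.app y)) := by
    rw [← id_tensorHom_id]
    exact hP'.massoc_natural (𝟙 v) (𝟙 w) (adj.counit.app y)
  trans (D.s (v ⊗ w) (G.obj y)).inv ≫ (P'.massoc v w (D.F.obj (G.obj y))).hom ≫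
    P'.actMap (𝟙 v) (P'.actMap (𝟙 w) (adj.counit.app y))
  · rw [Functor.map_comp, assoc, adj.counit_naturality (P'.massoc v w y).hom, reassoc_of% hmate,
      hcounit]
  · rw [Functor.map_comp, Functor.map_comp, assoc, assoc, hmate,
      reassoc_of% (hD.map_actMap_comp_s_inv (𝟙 v) _), hP'.actMap_comp_actMap_id, hmate,
      ← hP'.actMap_comp_actMap_id, reassoc_of% (hD.map_massoc_comp_s_inv hP' v w (G.obj y))]

theorem rightAdjointS_triangle (hD : D.IsModuleFunctor) (y : M') :
    (D.rightAdjointS hP' adj (𝟙_ V) y).hom ≫ G.map (P'.munit y).hom =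
      (P.munit (G.obj y)).hom := by
  apply adj.eq_of_map_comp_counit
  have hmate := D.map_rightAdjointS_hom_comp_counit hP' adj
  have hcounit : P'.actMap (𝟙 (𝟙_ V)) (adj.counit.app y) ≫ (P'.munit y).hom =
      (P'.munit (D.F.obj (G.obj y))).hom ≫ adj.counit.app y :=
    hP'.munit_natural (adj.counit.app y)
  rw [Functor.map_comp, assoc, adj.counit_naturality (P'.munit y).hom, reassoc_of% hmate,
    hcounit, ← assoc, hD.s_inv_comp_munit]

theorem isModuleFunctor_rightAdjoint (hD : D.IsModuleFunctor) :
    (D.rightAdjoint hP' adj).IsModuleFunctor :=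
  ⟨rightAdjointS_natural hP' adj hD, rightAdjointS_pentagon hP' adj hD,
    rightAdjointS_triangle hP' adj hD⟩

theorem isModuleNT_unit (hD : D.IsModuleFunctor) :
    IsModuleNT (ModuleFunctorData.id P) (D.comp (D.rightAdjoint hP' adj)) adj.unit := by
  intro v x
  change 𝟙 (P.act v x) ≫ adj.unit.app (P.act v x) = P.actMap (𝟙 v) (adj.unit.app x) ≫
    (D.rightAdjointS hP' adj v (D.F.obj x)).hom ≫ G.map (D.s v x).hom
  apply adj.eq_of_map_comp_counit
  have hmate := D.map_rightAdjointS_hom_comp_counit hP' adj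
  have hη : D.F.map (P.actMap (𝟙 v) (adj.unit.app x)) ≫ (D.s v (G.obj (D.F.obj x))).inv =
      (D.s v x).inv ≫ P'.actMap (𝟙 v) (D.F.map (adj.unit.app x)) :=
    hD.map_actMap_comp_s_inv _ _
  have hid : P'.actMap (𝟙 v) (D.F.map (adj.unit.app x)) ≫
      P'.actMap (𝟙 v) (adj.counit.app (D.F.obj x)) = 𝟙 (P'.act v (D.F.obj x)) := by
    rw [hP'.actMap_comp_actMap_id, adj.left_triangle_components x]
    exact hP'.actMap_id v _
  rw [id_comp, adj.left_triangle_components, Functor.map_comp, Functor.map_comp, assoc, assoc,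
    adj.counit_naturality (D.s v x).hom, reassoc_of% hmate, reassoc_of% hη, reassoc_of% hid,
    Iso.inv_hom_id]

theorem isModuleNT_counit :
    IsModuleNT ((D.rightAdjoint hP' adj).comp D) (ModuleFunctorData.id P') adj.counit := by
  intro v y
  change ((D.s v (G.obj y)).hom ≫ D.F.map (D.rightAdjointS hP' adj v y).hom) ≫
    adj.counit.app (P'.act v y) = P'.actMap (𝟙 v) (adj.counit.app y) ≫ 𝟙 _
  rw [assoc, map_rightAdjointS_hom_comp_counit, Iso.hom_inv_id_assoc, comp_id]

end ModuleFunctorData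

theorem module_functor_equivalence_tfae_general {P : ModuleData V M} {P' : ModuleData V M'}
    (hP' : P'.IsModule)
    (D : ModuleFunctorData P P') (hD : D.IsModuleFunctor) :
    List.TFAE [
      (∃ E : ModuleFunctorData P' P, E.IsModuleFunctor ∧
        ∃ (η : (ModuleFunctorData.id P).F ≅ (D.comp E).F)
          (ε : (E.comp D).F ≅ (ModuleFunctorData.id P').F),
          IsModuleNT (ModuleFunctorData.id P) (D.comp E) η.hom ∧
            IsModuleNT (E.comp D) (ModuleFunctorData.id P') ε.hom),
      (∃ E : ModuleFunctorData P' P, E.IsModuleFunctor ∧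
        ∃ (η : (ModuleFunctorData.id P).F ≅ (D.comp E).F)
          (ε : (E.comp D).F ≅ (ModuleFunctorData.id P').F),
          IsModuleNT (ModuleFunctorData.id P) (D.comp E) η.hom ∧
            IsModuleNT (E.comp D) (ModuleFunctorData.id P') ε.hom ∧
            (∀ x : M, D.F.map (η.hom.app x) ≫ ε.hom.app (D.F.obj x) = 𝟙 (D.F.obj x)) ∧
            (∀ y : M', η.hom.app (E.F.obj y) ≫ E.F.map (ε.hom.app y) = 𝟙 (E.F.obj y))),
      D.F.IsEquivalence] := by
  tfae_have 2 → 1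
  | ⟨E, hE, η, ε, hη, hε, _, _⟩ => ⟨E, hE, η, ε, hη, hε⟩
  tfae_have 1 → 3
  | ⟨E, _, η, ε, _, _⟩ =>
    (CategoryTheory.Equivalence.mk D.F E.F η ε).isEquivalence_functor
  tfae_have 3 → 2 := fun _ => by
    let adj : D.F ⊣ D.F.inv := D.F.asEquivalence.toAdjunction
    have : IsIso adj.unit := inferInstanceAs (IsIso D.F.asEquivalence.unitIso.hom)
    have : IsIso adj.counit := inferInstanceAs (IsIso D.F.asEquivalence.counitIso.hom)
    exact ⟨D.rightAdjoint hP' adj, ModuleFunctorData.isModuleFunctor_rightAdjoint hP' adj hD,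
      (asIso adj.unit : 𝟭 M ≅ D.F ⋙ D.F.inv), (asIso adj.counit : D.F.inv ⋙ D.F ≅ 𝟭 M'),
      ModuleFunctorData.isModuleNT_unit hP' adj hD,
      ModuleFunctorData.isModuleNT_counit hP' adj, adj.left_triangle_components,
      adj.right_triangle_components⟩
  tfae_finish

/-- For a module functor `F : M ⟶ M'` between left module categories
over `V` the following are equivalent: (i) `F` is an equivalence of module categories;
(ii) `F` is part of an adjoint equivalence of module categories; (iii) the underlying
functor of `F` is an equivalence of ordinary categories. -/
theorem module_functor_equivalence_tfae {P : ModuleData V M} {P' : ModuleData V M'}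
    (hP : P.IsModule) (hP' : P'.IsModule)
    (D : ModuleFunctorData P P') (hD : D.IsModuleFunctor) :
    List.TFAE [
      (∃ E : ModuleFunctorData P' P, E.IsModuleFunctor ∧
        ∃ (η : (ModuleFunctorData.id P).F ≅ (D.comp E).F)
          (ε : (E.comp D).F ≅ (ModuleFunctorData.id P').F),
          IsModuleNT (ModuleFunctorData.id P) (D.comp E) η.hom ∧
            IsModuleNT (E.comp D) (ModuleFunctorData.id P') ε.hom),
      (∃ E : ModuleFunctorData P' P, E.IsModuleFunctor ∧
        ∃ (η : (ModuleFunctorData.id P).F ≅ (D.comp E).F)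
          (ε : (E.comp D).F ≅ (ModuleFunctorData.id P').F),
          IsModuleNT (ModuleFunctorData.id P) (D.comp E) η.hom ∧
            IsModuleNT (E.comp D) (ModuleFunctorData.id P') ε.hom ∧
            (∀ x : M, D.F.map (η.hom.app x) ≫ ε.hom.app (D.F.obj x) = 𝟙 (D.F.obj x)) ∧
            (∀ y : M', η.hom.app (E.F.obj y) ≫ E.F.map (ε.hom.app y) = 𝟙 (E.F.obj y))),
      D.F.IsEquivalence] :=
  module_functor_equivalence_tfae_general hP' D hD

end Stmt3

end ModMonPaper
end

section
/- Let M be a non-unital module monoidal category over a braided monoidal category V. Then for all m, n ∈ M the two triangles (α¹&l^▷) l^▷_{m⊗n} ∘ α¹_{1_V,m,n} = l^▷_m ⊗ id_n and (α²&l^▷) l^▷_{m⊗n} ∘ α²_{1_V,m,n} = id_m ⊗ l^▷_n commute. -/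
open CategoryTheory MonoidalCategory Category

universe v₁ v₂ v₃ v₄ u₁ u₂ u₃ u₄

/-! ### Non-unital module monoidal categories -/

namespace ModMonPaper

section NU

variable (V : Type u₁) [Category.{v₁} V] [MonoidalCategory V]
variable (M : Type u₂) [Category.{v₂} M]
variable (M' : Type u₃) [Category.{v₃} M']

/-- The data of a (possibly non-unital) monoidal structure on `M`. -/
structure NUMonData where
  tensor : M → M → M
  tmap : ∀ {x x' y y' : M}, (x ⟶ x') → (y ⟶ y') → (tensor x y ⟶ tensor x' y')
  assoc : ∀ x y z : M, tensor (tensor x y) z ≅ tensor x (tensor y z)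

variable {M M'}

/-- The axioms of a non-unital monoidal category. -/
structure NUMonData.IsNUMon (Q : NUMonData M) : Prop where
  tmap_id : ∀ x y : M, Q.tmap (𝟙 x) (𝟙 y) = 𝟙 (Q.tensor x y)
  tmap_comp : ∀ {x x' x'' y y' y'' : M} (f : x ⟶ x') (f' : x' ⟶ x'')
    (g : y ⟶ y') (g' : y' ⟶ y''),
    Q.tmap (f ≫ f') (g ≫ g') = Q.tmap f g ≫ Q.tmap f' g'
  assoc_natural : ∀ {x x' y y' z z' : M} (f : x ⟶ x') (g : y ⟶ y') (h : z ⟶ z'),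
    Q.tmap (Q.tmap f g) h ≫ (Q.assoc x' y' z').hom =
      (Q.assoc x y z).hom ≫ Q.tmap f (Q.tmap g h)
  pentagon : ∀ u v w x : M,
    Q.tmap (Q.assoc u v w).hom (𝟙 x) ≫ (Q.assoc u (Q.tensor v w) x).hom ≫
        Q.tmap (𝟙 u) (Q.assoc v w x).hom =
      (Q.assoc (Q.tensor u v) w x).hom ≫ (Q.assoc u v (Q.tensor w x)).hom

/-- Tensoring two isomorphisms in a non-unital monoidal category. -/
def NUMonData.tmapIso (Q : NUMonData M)
    (hid : ∀ x y : M, Q.tmap (𝟙 x) (𝟙 y) = 𝟙 (Q.tensor x y))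
    (hcomp : ∀ {x x' x'' y y' y'' : M} (f : x ⟶ x') (f' : x' ⟶ x'')
      (g : y ⟶ y') (g' : y' ⟶ y''),
      Q.tmap (f ≫ f') (g ≫ g') = Q.tmap f g ≫ Q.tmap f' g')
    {x x' y y' : M} (e : x ≅ x') (f : y ≅ y') : Q.tensor x y ≅ Q.tensor x' y' where
  hom := Q.tmap e.hom f.hom
  inv := Q.tmap e.inv f.inv
  hom_inv_id := by rw [← hcomp]; simp [hid]
  inv_hom_id := by rw [← hcomp]; simp [hid]

variable (M) in
/-- The data of a non-unital module monoidal category over `V`. -/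
structure NUModMonData where
  tens : NUMonData M
  mod : ModuleData V M
  α₁ : ∀ (v : V) (x y : M), tens.tensor (mod.act v x) y ≅ mod.act v (tens.tensor x y)
  α₂ : ∀ (v : V) (x y : M), tens.tensor x (mod.act v y) ≅ mod.act v (tens.tensor x y)

variable {V}

/-- The axioms of a non-unital module monoidal category over a braided category `V`. -/
structure NUModMonData.IsNUModMon [BraidedCategory V] (P : NUModMonData V M) : Prop where
  tens : P.tens.IsNUMon
  mod : P.mod.IsModule
  α₁_natural : ∀ {v v' : V} {x x' y y' : M} (f : v ⟶ v') (g : x ⟶ x') (h : y ⟶ y'),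
    P.tens.tmap (P.mod.actMap f g) h ≫ (P.α₁ v' x' y').hom =
      (P.α₁ v x y).hom ≫ P.mod.actMap f (P.tens.tmap g h)
  α₂_natural : ∀ {v v' : V} {x x' y y' : M} (f : v ⟶ v') (g : x ⟶ x') (h : y ⟶ y'),
    P.tens.tmap g (P.mod.actMap f h) ≫ (P.α₂ v' x' y').hom =
      (P.α₂ v x y).hom ≫ P.mod.actMap f (P.tens.tmap g h)
  α₁_assoc : ∀ (v : V) (l m n : M),
    P.tens.tmap (P.α₁ v l m).hom (𝟙 n) ≫ (P.α₁ v (P.tens.tensor l m) n).hom ≫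
        P.mod.actMap (𝟙 v) (P.tens.assoc l m n).hom =
      (P.tens.assoc (P.mod.act v l) m n).hom ≫ (P.α₁ v l (P.tens.tensor m n)).hom
  α₁_massoc : ∀ (v w : V) (m n : M),
    P.tens.tmap (P.mod.massoc v w m).hom (𝟙 n) ≫ (P.α₁ v (P.mod.act w m) n).hom ≫
        P.mod.actMap (𝟙 v) (P.α₁ w m n).hom =
      (P.α₁ (v ⊗ w) m n).hom ≫ (P.mod.massoc v w (P.tens.tensor m n)).hom
  α₂_assoc : ∀ (v : V) (l m n : M),
    (P.tens.assoc l m (P.mod.act v n)).hom ≫ P.tens.tmap (𝟙 l) (P.α₂ v m n).hom ≫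
        (P.α₂ v l (P.tens.tensor m n)).hom =
      (P.α₂ v (P.tens.tensor l m) n).hom ≫ P.mod.actMap (𝟙 v) (P.tens.assoc l m n).hom
  α₂_massoc : ∀ (v w : V) (m n : M),
    P.tens.tmap (𝟙 m) (P.mod.massoc v w n).hom ≫ (P.α₂ v m (P.mod.act w n)).hom ≫
        P.mod.actMap (𝟙 v) (P.α₂ w m n).hom =
      (P.α₂ (v ⊗ w) m n).hom ≫ (P.mod.massoc v w (P.tens.tensor m n)).hom
  α₁_α₂ : ∀ (v : V) (l m n : M),
    P.tens.tmap (P.α₂ v l m).hom (𝟙 n) ≫ (P.α₁ v (P.tens.tensor l m) n).hom ≫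
        P.mod.actMap (𝟙 v) (P.tens.assoc l m n).hom =
      (P.tens.assoc l (P.mod.act v m) n).hom ≫ P.tens.tmap (𝟙 l) (P.α₁ v m n).hom ≫
        (P.α₂ v l (P.tens.tensor m n)).hom
  braiding_act : ∀ (v w : V) (m n : M),
    (P.α₂ v (P.mod.act w m) n).hom ≫ P.mod.actMap (𝟙 v) (P.α₁ w m n).hom ≫
        (P.mod.massoc v w (P.tens.tensor m n)).inv ≫
          P.mod.actMap (β_ v w).hom (𝟙 (P.tens.tensor m n)) =
      (P.α₁ w m (P.mod.act v n)).hom ≫ P.mod.actMap (𝟙 w) (P.α₂ v m n).hom ≫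
        (P.mod.massoc w v (P.tens.tensor m n)).inv

/-- The data of a non-unital module monoidal functor. -/
structure NUMMFunctorData (P : NUModMonData V M) (P' : NUModMonData V M') where
  F : M ⥤ M'
  φ₂ : ∀ x y : M, P'.tens.tensor (F.obj x) (F.obj y) ≅ F.obj (P.tens.tensor x y)
  s : ∀ (v : V) (x : M), P'.mod.act v (F.obj x) ≅ F.obj (P.mod.act v x)

/-- The axioms of a non-unital module monoidal functor. -/
structure NUMMFunctorData.IsNUMMFunctor {P : NUModMonData V M} {P' : NUModMonData V M'}
    (D : NUMMFunctorData P P') : Prop where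
  φ₂_natural : ∀ {x x' y y' : M} (f : x ⟶ x') (g : y ⟶ y'),
    P'.tens.tmap (D.F.map f) (D.F.map g) ≫ (D.φ₂ x' y').hom =
      (D.φ₂ x y).hom ≫ D.F.map (P.tens.tmap f g)
  hexagon : ∀ x y z : M,
    P'.tens.tmap (D.φ₂ x y).hom (𝟙 (D.F.obj z)) ≫ (D.φ₂ (P.tens.tensor x y) z).hom ≫
        D.F.map (P.tens.assoc x y z).hom =
      (P'.tens.assoc (D.F.obj x) (D.F.obj y) (D.F.obj z)).hom ≫
        P'.tens.tmap (𝟙 (D.F.obj x)) (D.φ₂ y z).hom ≫ (D.φ₂ x (P.tens.tensor y z)).hom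
  s_natural : ∀ {v w : V} {x y : M} (f : v ⟶ w) (g : x ⟶ y),
    P'.mod.actMap f (D.F.map g) ≫ (D.s w y).hom = (D.s v x).hom ≫ D.F.map (P.mod.actMap f g)
  s_pentagon : ∀ (v w : V) (x : M),
    (D.s (v ⊗ w) x).hom ≫ D.F.map (P.mod.massoc v w x).hom =
      (P'.mod.massoc v w (D.F.obj x)).hom ≫ P'.mod.actMap (𝟙 v) (D.s w x).hom ≫
        (D.s v (P.mod.act w x)).hom
  s_triangle : ∀ x : M,
    (D.s (𝟙_ V) x).hom ≫ D.F.map (P.mod.munit x).hom = (P'.mod.munit (D.F.obj x)).hom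
  compα₁ : ∀ (v : V) (x y : M),
    (P'.α₁ v (D.F.obj x) (D.F.obj y)).hom ≫ P'.mod.actMap (𝟙 v) (D.φ₂ x y).hom ≫
        (D.s v (P.tens.tensor x y)).hom =
      P'.tens.tmap (D.s v x).hom (𝟙 (D.F.obj y)) ≫ (D.φ₂ (P.mod.act v x) y).hom ≫
        D.F.map (P.α₁ v x y).hom
  compα₂ : ∀ (v : V) (x y : M),
    (P'.α₂ v (D.F.obj x) (D.F.obj y)).hom ≫ P'.mod.actMap (𝟙 v) (D.φ₂ x y).hom ≫
        (D.s v (P.tens.tensor x y)).hom =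
      P'.tens.tmap (𝟙 (D.F.obj x)) (D.s v y).hom ≫ (D.φ₂ x (P.mod.act v y)).hom ≫
        D.F.map (P.α₂ v x y).hom

/-- The identity non-unital module monoidal functor data. -/
def NUMMFunctorData.id (P : NUModMonData V M) : NUMMFunctorData P P :=
  ⟨𝟭 M, fun x y => Iso.refl (P.tens.tensor x y), fun v x => Iso.refl (P.mod.act v x)⟩

/-- Composition of non-unital module monoidal functor data. -/
def NUMMFunctorData.comp {M'' : Type u₄} [Category.{v₄} M''] {P : NUModMonData V M}
    {P' : NUModMonData V M'} {P'' : NUModMonData V M''}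
    (D : NUMMFunctorData P P') (E : NUMMFunctorData P' P'') : NUMMFunctorData P P'' :=
  ⟨D.F ⋙ E.F,
    fun x y => E.φ₂ (D.F.obj x) (D.F.obj y) ≪≫ E.F.mapIso (D.φ₂ x y),
    fun v x => E.s v (D.F.obj x) ≪≫ E.F.mapIso (D.s v x)⟩

/-- Non-unital module monoidal natural transformations. -/
def IsNUMMNT {P : NUModMonData V M} {P' : NUModMonData V M'}
    (D E : NUMMFunctorData P P') (τ : D.F ⟶ E.F) : Prop :=
  (∀ x y : M, (D.φ₂ x y).hom ≫ τ.app (P.tens.tensor x y) =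
      P'.tens.tmap (τ.app x) (τ.app y) ≫ (E.φ₂ x y).hom) ∧
    ∀ (v : V) (x : M), (D.s v x).hom ≫ τ.app (P.mod.act v x) =
      P'.mod.actMap (𝟙 v) (τ.app x) ≫ (E.s v x).hom

end NU

end ModMonPaper

/-! The triangles are the unit axiom of a module functor: `α¹_{-,-,n}` and `α²_{-,m,-}` make
`- ⊗ n` and `m ⊗ -` module functors, and for a module functor the unit axiom follows from the
associativity axiom. Indeed `𝟙_V ▷ -` is faithful (it is isomorphic to the identity via `l^▷`),
and after applying it and precomposing with the isomorphism `t_{1,1▷x} ∘ F(m_{1,1,x})`, both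
sides become `F(ρ_1 ▷ x)` followed by `t_{1,x}`, by the module triangle
`m_{1,1,x} ≫ 1 ▷ l_x = ρ_1 ▷ x` applied once in `M` and once in `M'`. -/

namespace ModMonPaper

section ModuleFunctorUnit

variable {V : Type u₁} [Category.{v₁} V] [MonoidalCategory V]
variable {M : Type u₂} [Category.{v₂} M] {M' : Type u₃} [Category.{v₃} M']

namespace ModuleData.IsModule

variable {P : ModuleData V M}

theorem actMap_id_comp (hP : P.IsModule) {x y z : M} (v : V) (f : x ⟶ y) (g : y ⟶ z) :
    P.actMap (𝟙 v) (f ≫ g) = P.actMap (𝟙 v) f ≫ P.actMap (𝟙 v) g := by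
  simpa using hP.actMap_comp (𝟙 v) (𝟙 v) f g

theorem actMap_unit_injective (hP : P.IsModule) {x y : M} :
    Function.Injective (fun f : x ⟶ y => P.actMap (𝟙 (𝟙_ V)) f) := by
  intro f g h
  rw [← cancel_epi (P.munit x).hom, ← hP.munit_natural f, ← hP.munit_natural g]
  exact congrArg (· ≫ (P.munit y).hom) h

theorem unit_triangle_of_pentagon {P' : ModuleData V M'} (hP : P.IsModule)
    (hP' : P'.IsModule) (F : M ⥤ M')
    (t : ∀ (v : V) (x : M), F.obj (P.act v x) ≅ P'.act v (F.obj x))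
    (t_natural : ∀ {v w : V} {x y : M} (f : v ⟶ w) (g : x ⟶ y),
      F.map (P.actMap f g) ≫ (t w y).hom = (t v x).hom ≫ P'.actMap f (F.map g))
    (t_pentagon : ∀ (v w : V) (x : M),
      F.map (P.massoc v w x).hom ≫ (t v (P.act w x)).hom ≫ P'.actMap (𝟙 v) (t w x).hom =
        (t (v ⊗ w) x).hom ≫ (P'.massoc v w (F.obj x)).hom)
    (x : M) :
    (t (𝟙_ V) x).hom ≫ (P'.munit (F.obj x)).hom = F.map (P.munit x).hom := by
  apply hP'.actMap_unit_injective
  beta_reduce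
  rw [hP'.actMap_id_comp, ← cancel_epi (F.map (P.massoc (𝟙_ V) (𝟙_ V) x).hom ≫
    (t (𝟙_ V) (P.act (𝟙_ V) x)).hom)]
  calc _ = (t (𝟙_ V ⊗ 𝟙_ V) x).hom ≫ P'.actMap (ρ_ (𝟙_ V)).hom (𝟙 (F.obj x)) := by
        simp only [assoc, reassoc_of% (t_pentagon (𝟙_ V) (𝟙_ V) x), hP'.triangle]
    _ = F.map (P.actMap (ρ_ (𝟙_ V)).hom (𝟙 x)) ≫ (t (𝟙_ V) x).hom := by
        rw [t_natural, F.map_id]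
    _ = _ := by
        rw [← hP.triangle, F.map_comp, assoc, t_natural, assoc]

end ModuleData.IsModule

end ModuleFunctorUnit

section TensorFunctors

variable {M : Type u₂} [Category.{v₂} M]

def NUMonData.tensorRight (Q : NUMonData M) (hQ : Q.IsNUMon) (n : M) : M ⥤ M where
  obj x := Q.tensor x n
  map f := Q.tmap f (𝟙 n)
  map_id x := hQ.tmap_id x n
  map_comp f g := by rw [← hQ.tmap_comp, comp_id]

def NUMonData.tensorLeft (Q : NUMonData M) (hQ : Q.IsNUMon) (m : M) : M ⥤ M where
  obj x := Q.tensor m x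
  map f := Q.tmap (𝟙 m) f
  map_id x := hQ.tmap_id m x
  map_comp f g := by rw [← hQ.tmap_comp, comp_id]

end TensorFunctors

section Stmt4

variable {V : Type u₁} [Category.{v₁} V] [MonoidalCategory V] [BraidedCategory V]
variable {M : Type u₂} [Category.{v₂} M]

/-- In any non-unital module monoidal category the two triangles
`(α¹ & l^▷)` and `(α² & l^▷)` commute. -/
theorem nuModMon_alpha_munit_triangles (P : NUModMonData V M) (hP : P.IsNUModMon)
    (x y : M) :
    (P.α₁ (𝟙_ V) x y).hom ≫ (P.mod.munit (P.tens.tensor x y)).hom =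
        P.tens.tmap (P.mod.munit x).hom (𝟙 y) ∧
      (P.α₂ (𝟙_ V) x y).hom ≫ (P.mod.munit (P.tens.tensor x y)).hom =
        P.tens.tmap (𝟙 x) (P.mod.munit y).hom :=
  ⟨hP.mod.unit_triangle_of_pentagon hP.mod (P.tens.tensorRight hP.tens y)
      (fun v x => P.α₁ v x y) (fun f g => hP.α₁_natural f g (𝟙 y))
      (fun v w x => hP.α₁_massoc v w x y) x,
    hP.mod.unit_triangle_of_pentagon hP.mod (P.tens.tensorLeft hP.tens x)
      (fun v y => P.α₂ v x y) (fun f g => hP.α₂_natural f (𝟙 x) g)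
      (fun v w y => hP.α₂_massoc v w x y) y⟩

end Stmt4

end ModMonPaper
end

section
/- Let M be a unital module monoidal category over a braided monoidal category V. Then for all v ∈ V and m ∈ M the two triangles (α¹&r) (id_v▷r_m) ∘ α¹_{v,m,1_M} = r_{v▷m} and (α²&l) (id_v▷l_m) ∘ α²_{v,1_M,m} = l_{v▷m} commute, where l and r are the left and right unitors of the monoidal structure on M. -/
/-! Both triangles are detected after whiskering by an arbitrary object `n`: naturality of `α¹`
(resp. `α²`), its compatibility with the associator and the triangle axiom of `M` rewrite
`(α¹ ≫ v ▷ ρ) ▷ n` into `ρ ▷ n` (resp. `n ◁ (α² ≫ v ▷ λ)` into `n ◁ λ`). Taking `n = 𝟙_ M`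
concludes, since whiskering by the unit object is faithful. -/

open CategoryTheory MonoidalCategory Category

universe v₁ v₂ v₃ v₄ u₁ u₂ u₃ u₄

/-! ### Unital module monoidal categories -/

namespace ModMonPaper

section UMM

variable (V : Type u₁) [Category.{v₁} V] [MonoidalCategory V]
variable (M : Type u₂) [Category.{v₂} M] [MonoidalCategory M]
variable (M' : Type u₃) [Category.{v₃} M'] [MonoidalCategory M']

/-- The data of a unital module monoidal category over `V` on the (unital) monoidal
category `M`: a module category structure together with the coherences `α₁` and `α₂`. -/
structure ModMonData extends ModuleData V M where
  α₁ : ∀ (v : V) (x y : M), act v x ⊗ y ≅ act v (x ⊗ y)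
  α₂ : ∀ (v : V) (x y : M), x ⊗ act v y ≅ act v (x ⊗ y)

variable {V M M'}

/-- The axioms of a unital module monoidal category over a braided category `V`. -/
structure ModMonData.IsModMon [BraidedCategory V] (P : ModMonData V M) : Prop where
  toIsModule : P.toModuleData.IsModule
  α₁_natural : ∀ {v v' : V} {x x' y y' : M} (f : v ⟶ v') (g : x ⟶ x') (h : y ⟶ y'),
    (P.actMap f g ⊗ₘ h) ≫ (P.α₁ v' x' y').hom = (P.α₁ v x y).hom ≫ P.actMap f (g ⊗ₘ h)
  α₂_natural : ∀ {v v' : V} {x x' y y' : M} (f : v ⟶ v') (g : x ⟶ x') (h : y ⟶ y'),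
    (g ⊗ₘ P.actMap f h) ≫ (P.α₂ v' x' y').hom = (P.α₂ v x y).hom ≫ P.actMap f (g ⊗ₘ h)
  α₁_assoc : ∀ (v : V) (l m n : M),
    ((P.α₁ v l m).hom ⊗ₘ 𝟙 n) ≫ (P.α₁ v (l ⊗ m) n).hom ≫ P.actMap (𝟙 v) (α_ l m n).hom =
      (α_ (P.act v l) m n).hom ≫ (P.α₁ v l (m ⊗ n)).hom
  α₁_massoc : ∀ (v w : V) (m n : M),
    ((P.massoc v w m).hom ⊗ₘ 𝟙 n) ≫ (P.α₁ v (P.act w m) n).hom ≫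
        P.actMap (𝟙 v) (P.α₁ w m n).hom =
      (P.α₁ (v ⊗ w) m n).hom ≫ (P.massoc v w (m ⊗ n)).hom
  α₂_assoc : ∀ (v : V) (l m n : M),
    (α_ l m (P.act v n)).hom ≫ (𝟙 l ⊗ₘ (P.α₂ v m n).hom) ≫ (P.α₂ v l (m ⊗ n)).hom =
      (P.α₂ v (l ⊗ m) n).hom ≫ P.actMap (𝟙 v) (α_ l m n).hom
  α₂_massoc : ∀ (v w : V) (m n : M),
    (𝟙 m ⊗ₘ (P.massoc v w n).hom) ≫ (P.α₂ v m (P.act w n)).hom ≫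
        P.actMap (𝟙 v) (P.α₂ w m n).hom =
      (P.α₂ (v ⊗ w) m n).hom ≫ (P.massoc v w (m ⊗ n)).hom
  α₁_α₂ : ∀ (v : V) (l m n : M),
    ((P.α₂ v l m).hom ⊗ₘ 𝟙 n) ≫ (P.α₁ v (l ⊗ m) n).hom ≫ P.actMap (𝟙 v) (α_ l m n).hom =
      (α_ l (P.act v m) n).hom ≫ (𝟙 l ⊗ₘ (P.α₁ v m n).hom) ≫ (P.α₂ v l (m ⊗ n)).hom
  braiding_act : ∀ (v w : V) (m n : M),
    (P.α₂ v (P.act w m) n).hom ≫ P.actMap (𝟙 v) (P.α₁ w m n).hom ≫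
        (P.massoc v w (m ⊗ n)).inv ≫ P.actMap (β_ v w).hom (𝟙 (m ⊗ n)) =
      (P.α₁ w m (P.act v n)).hom ≫ P.actMap (𝟙 w) (P.α₂ v m n).hom ≫
        (P.massoc w v (m ⊗ n)).inv

/-- The data of a unital module monoidal functor. -/
structure UMMFunctorData (P : ModMonData V M) (P' : ModMonData V M') where
  F : M ⥤ M'
  φ₂ : ∀ x y : M, F.obj x ⊗ F.obj y ≅ F.obj (x ⊗ y)
  φ₀ : 𝟙_ M' ≅ F.obj (𝟙_ M)
  s : ∀ (v : V) (x : M), P'.act v (F.obj x) ≅ F.obj (P.act v x)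

/-- The axioms of a unital module monoidal functor. -/
structure UMMFunctorData.IsUMMFunctor {P : ModMonData V M} {P' : ModMonData V M'}
    (D : UMMFunctorData P P') : Prop where
  φ₂_natural : ∀ {x x' y y' : M} (f : x ⟶ x') (g : y ⟶ y'),
    (D.F.map f ⊗ₘ D.F.map g) ≫ (D.φ₂ x' y').hom = (D.φ₂ x y).hom ≫ D.F.map (f ⊗ₘ g)
  hexagon : ∀ x y z : M,
    ((D.φ₂ x y).hom ⊗ₘ 𝟙 (D.F.obj z)) ≫ (D.φ₂ (x ⊗ y) z).hom ≫ D.F.map (α_ x y z).hom =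
      (α_ (D.F.obj x) (D.F.obj y) (D.F.obj z)).hom ≫ (𝟙 (D.F.obj x) ⊗ₘ (D.φ₂ y z).hom) ≫
        (D.φ₂ x (y ⊗ z)).hom
  φ₀_left : ∀ x : M,
    (D.φ₀.hom ⊗ₘ 𝟙 (D.F.obj x)) ≫ (D.φ₂ (𝟙_ M) x).hom ≫ D.F.map (λ_ x).hom =
      (λ_ (D.F.obj x)).hom
  φ₀_right : ∀ x : M,
    (𝟙 (D.F.obj x) ⊗ₘ D.φ₀.hom) ≫ (D.φ₂ x (𝟙_ M)).hom ≫ D.F.map (ρ_ x).hom =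
      (ρ_ (D.F.obj x)).hom
  s_natural : ∀ {v w : V} {x y : M} (f : v ⟶ w) (g : x ⟶ y),
    P'.actMap f (D.F.map g) ≫ (D.s w y).hom = (D.s v x).hom ≫ D.F.map (P.actMap f g)
  s_pentagon : ∀ (v w : V) (x : M),
    (D.s (v ⊗ w) x).hom ≫ D.F.map (P.massoc v w x).hom =
      (P'.massoc v w (D.F.obj x)).hom ≫ P'.actMap (𝟙 v) (D.s w x).hom ≫
        (D.s v (P.act w x)).hom
  s_triangle : ∀ x : M,
    (D.s (𝟙_ V) x).hom ≫ D.F.map (P.munit x).hom = (P'.munit (D.F.obj x)).hom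
  compα₁ : ∀ (v : V) (x y : M),
    (P'.α₁ v (D.F.obj x) (D.F.obj y)).hom ≫ P'.actMap (𝟙 v) (D.φ₂ x y).hom ≫
        (D.s v (x ⊗ y)).hom =
      ((D.s v x).hom ⊗ₘ 𝟙 (D.F.obj y)) ≫ (D.φ₂ (P.act v x) y).hom ≫
        D.F.map (P.α₁ v x y).hom
  compα₂ : ∀ (v : V) (x y : M),
    (P'.α₂ v (D.F.obj x) (D.F.obj y)).hom ≫ P'.actMap (𝟙 v) (D.φ₂ x y).hom ≫
        (D.s v (x ⊗ y)).hom =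
      (𝟙 (D.F.obj x) ⊗ₘ (D.s v y).hom) ≫ (D.φ₂ x (P.act v y)).hom ≫
        D.F.map (P.α₂ v x y).hom

/-- The identity unital module monoidal functor data. -/
def UMMFunctorData.id (P : ModMonData V M) : UMMFunctorData P P :=
  ⟨𝟭 M, fun x y => Iso.refl (x ⊗ y), Iso.refl (𝟙_ M), fun v x => Iso.refl (P.act v x)⟩

/-- Composition of unital module monoidal functor data. -/
def UMMFunctorData.comp {M'' : Type u₄} [Category.{v₄} M''] [MonoidalCategory M'']
    {P : ModMonData V M} {P' : ModMonData V M'} {P'' : ModMonData V M''}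
    (D : UMMFunctorData P P') (E : UMMFunctorData P' P'') : UMMFunctorData P P'' :=
  ⟨D.F ⋙ E.F,
    fun x y => E.φ₂ (D.F.obj x) (D.F.obj y) ≪≫ E.F.mapIso (D.φ₂ x y),
    E.φ₀ ≪≫ E.F.mapIso D.φ₀,
    fun v x => E.s v (D.F.obj x) ≪≫ E.F.mapIso (D.s v x)⟩

/-- Unital module monoidal natural transformations. -/
def IsUMMNT {P : ModMonData V M} {P' : ModMonData V M'}
    (D E : UMMFunctorData P P') (τ : D.F ⟶ E.F) : Prop :=
  (∀ x y : M, (D.φ₂ x y).hom ≫ τ.app (x ⊗ y) = (τ.app x ⊗ₘ τ.app y) ≫ (E.φ₂ x y).hom) ∧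
    (D.φ₀.hom ≫ τ.app (𝟙_ M) = E.φ₀.hom) ∧
    ∀ (v : V) (x : M), (D.s v x).hom ≫ τ.app (P.act v x) =
      P'.actMap (𝟙 v) (τ.app x) ≫ (E.s v x).hom

/-- `D` is an equivalence of unital module monoidal categories. -/
def UMMFunctorData.IsEquiv {P : ModMonData V M} {P' : ModMonData V M'}
    (D : UMMFunctorData P P') : Prop :=
  ∃ E : UMMFunctorData P' P, E.IsUMMFunctor ∧
    ∃ (η : (UMMFunctorData.id P).F ≅ (UMMFunctorData.comp D E).F)
      (ε : (UMMFunctorData.comp E D).F ≅ (UMMFunctorData.id P').F),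
      IsUMMNT (UMMFunctorData.id P) (UMMFunctorData.comp D E) η.hom ∧
        IsUMMNT (UMMFunctorData.comp E D) (UMMFunctorData.id P') ε.hom

end UMM

end ModMonPaper

namespace ModMonPaper

theorem whiskerRight_tensorUnit_injective {C : Type*} [Category C] [MonoidalCategory C]
    {X Y : C} : Function.Injective (fun f : X ⟶ Y => f ▷ 𝟙_ C) := by
  intro f g h
  simpa using h

theorem whiskerLeft_tensorUnit_injective {C : Type*} [Category C] [MonoidalCategory C]
    {X Y : C} : Function.Injective (fun f : X ⟶ Y => 𝟙_ C ◁ f) := by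
  intro f g h
  simpa using h

section

variable {V : Type u₁} [Category.{v₁} V] [MonoidalCategory V]
variable {M : Type u₂} [Category.{v₂} M]

theorem ModuleData.IsModule.actMap_id_comp_s7 {P : ModuleData V M} (hP : P.IsModule) (v : V)
    {x y z : M} (f : x ⟶ y) (g : y ⟶ z) :
    P.actMap (𝟙 v) (f ≫ g) = P.actMap (𝟙 v) f ≫ P.actMap (𝟙 v) g := by
  simpa using hP.actMap_comp (𝟙 v) (𝟙 v) f g

end

namespace ModMonData.IsModMon

variable {V : Type u₁} [Category.{v₁} V] [MonoidalCategory V] [BraidedCategory V]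
variable {M : Type u₂} [Category.{v₂} M] [MonoidalCategory M]
variable {P : ModMonData V M}

theorem whiskerLeft_α₁ (hP : P.IsModMon) (v : V) {x y y' : M} (h : y ⟶ y') :
    (P.act v x ◁ h) ≫ (P.α₁ v x y').hom = (P.α₁ v x y).hom ≫ P.actMap (𝟙 v) (x ◁ h) := by
  simpa [hP.toIsModule.actMap_id] using hP.α₁_natural (𝟙 v) (𝟙 x) h

theorem actMap_whiskerRight_α₁ (hP : P.IsModMon) (v : V) {x x' : M} (g : x ⟶ x') (y : M) :
    (P.actMap (𝟙 v) g ▷ y) ≫ (P.α₁ v x' y).hom = (P.α₁ v x y).hom ≫ P.actMap (𝟙 v) (g ▷ y) := by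
  simpa using hP.α₁_natural (𝟙 v) g (𝟙 y)

theorem whiskerRight_α₂ (hP : P.IsModMon) (v : V) {x x' : M} (g : x ⟶ x') (y : M) :
    (g ▷ P.act v y) ≫ (P.α₂ v x' y).hom = (P.α₂ v x y).hom ≫ P.actMap (𝟙 v) (g ▷ y) := by
  simpa [hP.toIsModule.actMap_id] using hP.α₂_natural (𝟙 v) g (𝟙 y)

theorem actMap_whiskerLeft_α₂ (hP : P.IsModMon) (v : V) (x : M) {y y' : M} (h : y ⟶ y') :
    (x ◁ P.actMap (𝟙 v) h) ≫ (P.α₂ v x y').hom = (P.α₂ v x y).hom ≫ P.actMap (𝟙 v) (x ◁ h) := by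
  simpa using hP.α₂_natural (𝟙 v) (𝟙 x) h

theorem α₁_rightUnitor_whiskerRight (hP : P.IsModMon) (v : V) (x n : M) :
    ((P.α₁ v x (𝟙_ M)).hom ≫ P.actMap (𝟙 v) (ρ_ x).hom) ▷ n = (ρ_ (P.act v x)).hom ▷ n := by
  have hassoc := hP.α₁_assoc v x (𝟙_ M) n
  rw [tensorHom_id] at hassoc
  rw [← cancel_mono (P.α₁ v x n).hom]
  calc _ = ((P.α₁ v x (𝟙_ M)).hom ▷ n) ≫ (P.α₁ v (x ⊗ 𝟙_ M) n).hom ≫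
          P.actMap (𝟙 v) (α_ x (𝟙_ M) n).hom ≫ P.actMap (𝟙 v) (x ◁ (λ_ n).hom) := by
        rw [comp_whiskerRight, assoc, hP.actMap_whiskerRight_α₁, ← hP.toIsModule.actMap_id_comp_s7,
          triangle]
    _ = (α_ (P.act v x) (𝟙_ M) n).hom ≫ (P.act v x ◁ (λ_ n).hom) ≫ (P.α₁ v x n).hom := by
        rw [reassoc_of% hassoc, hP.whiskerLeft_α₁]
    _ = _ := by rw [triangle_assoc]

theorem whiskerLeft_α₂_leftUnitor (hP : P.IsModMon) (v : V) (n x : M) :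
    n ◁ ((P.α₂ v (𝟙_ M) x).hom ≫ P.actMap (𝟙 v) (λ_ x).hom) = n ◁ (λ_ (P.act v x)).hom := by
  have hassoc : n ◁ (P.α₂ v (𝟙_ M) x).hom ≫ (P.α₂ v n (𝟙_ M ⊗ x)).hom =
      (α_ n (𝟙_ M) (P.act v x)).inv ≫ (P.α₂ v (n ⊗ 𝟙_ M) x).hom ≫
        P.actMap (𝟙 v) (α_ n (𝟙_ M) x).hom :=
    (Iso.eq_inv_comp _).2 (by rw [← id_tensorHom]; exact hP.α₂_assoc v n (𝟙_ M) x)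
  rw [← cancel_mono (P.α₂ v n x).hom]
  calc _ = (α_ n (𝟙_ M) (P.act v x)).inv ≫ (P.α₂ v (n ⊗ 𝟙_ M) x).hom ≫
          P.actMap (𝟙 v) (α_ n (𝟙_ M) x).hom ≫ P.actMap (𝟙 v) (n ◁ (λ_ x).hom) := by
        rw [whiskerLeft_comp, assoc, hP.actMap_whiskerLeft_α₂, reassoc_of% hassoc]
    _ = (α_ n (𝟙_ M) (P.act v x)).inv ≫ ((ρ_ n).hom ▷ P.act v x) ≫ (P.α₂ v n x).hom := by
        rw [← hP.toIsModule.actMap_id_comp_s7, triangle, hP.whiskerRight_α₂]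
    _ = _ := by rw [triangle_assoc_comp_right_assoc]

theorem α₁_rightUnitor (hP : P.IsModMon) (v : V) (x : M) :
    (P.α₁ v x (𝟙_ M)).hom ≫ P.actMap (𝟙 v) (ρ_ x).hom = (ρ_ (P.act v x)).hom :=
  whiskerRight_tensorUnit_injective (hP.α₁_rightUnitor_whiskerRight v x (𝟙_ M))

theorem α₂_leftUnitor (hP : P.IsModMon) (v : V) (x : M) :
    (P.α₂ v (𝟙_ M) x).hom ≫ P.actMap (𝟙 v) (λ_ x).hom = (λ_ (P.act v x)).hom :=
  whiskerLeft_tensorUnit_injective (hP.whiskerLeft_α₂_leftUnitor v (𝟙_ M) x)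

end ModMonData.IsModMon

section Stmt7

variable {V : Type u₁} [Category.{v₁} V] [MonoidalCategory V] [BraidedCategory V]
variable {M : Type u₂} [Category.{v₂} M] [MonoidalCategory M]

/-- In any unital module monoidal category the two triangles
`(α¹ & r)` and `(α² & l)` commute. -/
theorem modMon_alpha_unitor_triangles (P : ModMonData V M) (hP : P.IsModMon)
    (v : V) (x : M) :
    (P.α₁ v x (𝟙_ M)).hom ≫ P.actMap (𝟙 v) (ρ_ x).hom = (ρ_ (P.act v x)).hom ∧
      (P.α₂ v (𝟙_ M) x).hom ≫ P.actMap (𝟙 v) (λ_ x).hom = (λ_ (P.act v x)).hom :=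
  ⟨hP.α₁_rightUnitor v x, hP.α₂_leftUnitor v x⟩

end Stmt7

end ModMonPaper
end

section
/- Let (T,F) be a pair over a braided monoidal category V. Then T, equipped with its given unital monoidal structure together with the action v▷m := F(v)⊗m (f▷g := F(f)⊗g), module associativity m_{v,w,m} := a_{F(v),F(w),m}∘(φ₂⁻¹_{v,w}⊗id_m), module unit l^▷_m := l_m∘(φ₀⁻¹⊗id_m), α¹_{v,m,n} := a_{F(v),m,n}, and α²_{v,m,n} := a_{F(v),m,n}∘(β⁻¹_{F(v),m}⊗id_n)∘a⁻¹_{m,F(v),n}, is a unital module monoidal category over V, where β_{F(v),-} is the half-braiding of F^Z(v) and φ₂, φ₀ are the monoidal structure of F. -/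
/-!
Each axiom for the action `F(v) ⊗ -` becomes an instance of Mac Lane coherence in `T` once a
single structure identity of the pair is substituted: the module pentagon and triangle use the
hexagon and the right unit axiom of `(F, φ₂, φ₀)`, (α²&a) the hexagon of the half-braiding,
(α²&m) the fact that `φ₂` is a morphism of `Z(T)`, and (β&▷) that `F^Z` is braided, i.e.
`F(β_{v,w}) = φ₂ ∘ β_{F(v),F(w)} ∘ φ₂⁻¹`. These identities are put in solved form, as formulas
for `F(a)`, `F(r)`, `F(β)` and for the inverse half-braidings at `l ⊗ m` and at `v ⊗ w`.
-/

open CategoryTheory MonoidalCategory Category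

universe v₁ v₂ v₃ v₄ u₁ u₂ u₃ u₄

/-! ### Pairs: braided central monoidal functors -/

namespace ModMonPaper

section Central

variable (V : Type u₁) [Category.{v₁} V] [MonoidalCategory V] [BraidedCategory V]
variable (T : Type u₂) [Category.{v₂} T] [MonoidalCategory T]
variable (T' : Type u₃) [Category.{v₃} T'] [MonoidalCategory T']

/-- The data of a braided central monoidal functor `V ⟶ T`, i.e. the data of a pair
`(T, F)`: the underlying functor `F`, the half-braidings of the chosen lift
`F^Z : V ⟶ Z(T)` to the Drinfeld center, and the monoidal structure `φ₂`, `φ₀`. -/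
structure CentralData where
  obj : V → T
  map : ∀ {v w : V}, (v ⟶ w) → (obj v ⟶ obj w)
  halfBraiding : ∀ (v : V) (t : T), obj v ⊗ t ≅ t ⊗ obj v
  φ₂ : ∀ v w : V, obj v ⊗ obj w ≅ obj (v ⊗ w)
  φ₀ : 𝟙_ T ≅ obj (𝟙_ V)

variable {V T T'}

/-- The axioms making `C : CentralData V T` into a braided central monoidal functor,
i.e. a pair `(T, F)`: `F` is a functor; each `(F v, halfBraiding v)` is an object of the
Drinfeld center `Z(T)`; `F f`, `φ₂` and `φ₀` are morphisms in `Z(T)`; the lift is a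
braided (strong) monoidal functor. -/
structure CentralData.IsCentral (C : CentralData V T) : Prop where
  map_id : ∀ v : V, C.map (𝟙 v) = 𝟙 (C.obj v)
  map_comp : ∀ {u v w : V} (f : u ⟶ v) (g : v ⟶ w), C.map (f ≫ g) = C.map f ≫ C.map g
  halfBraiding_natural : ∀ (v : V) {t t' : T} (f : t ⟶ t'),
    (𝟙 (C.obj v) ⊗ₘ f) ≫ (C.halfBraiding v t').hom =
      (C.halfBraiding v t).hom ≫ (f ⊗ₘ 𝟙 (C.obj v))
  halfBraiding_hex : ∀ (v : V) (x y : T),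
    (α_ (C.obj v) x y).hom ≫ (C.halfBraiding v (x ⊗ y)).hom ≫ (α_ x y (C.obj v)).hom =
      ((C.halfBraiding v x).hom ⊗ₘ 𝟙 y) ≫ (α_ x (C.obj v) y).hom ≫
        (𝟙 x ⊗ₘ (C.halfBraiding v y).hom)
  map_central : ∀ {v w : V} (f : v ⟶ w) (t : T),
    (C.map f ⊗ₘ 𝟙 t) ≫ (C.halfBraiding w t).hom =
      (C.halfBraiding v t).hom ≫ (𝟙 t ⊗ₘ C.map f)
  φ₂_natural : ∀ {v v' w w' : V} (f : v ⟶ v') (g : w ⟶ w'),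
    (C.map f ⊗ₘ C.map g) ≫ (C.φ₂ v' w').hom = (C.φ₂ v w).hom ≫ C.map (f ⊗ₘ g)
  φ₂_central : ∀ (v w : V) (t : T),
    ((C.φ₂ v w).hom ⊗ₘ 𝟙 t) ≫ (C.halfBraiding (v ⊗ w) t).hom =
      ((α_ (C.obj v) (C.obj w) t).hom ≫ (𝟙 (C.obj v) ⊗ₘ (C.halfBraiding w t).hom) ≫
        (α_ (C.obj v) t (C.obj w)).inv ≫ ((C.halfBraiding v t).hom ⊗ₘ 𝟙 (C.obj w)) ≫
          (α_ t (C.obj v) (C.obj w)).hom) ≫ (𝟙 t ⊗ₘ (C.φ₂ v w).hom)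
  φ₀_central : ∀ t : T,
    (C.φ₀.hom ⊗ₘ 𝟙 t) ≫ (C.halfBraiding (𝟙_ V) t).hom =
      ((λ_ t).hom ≫ (ρ_ t).inv) ≫ (𝟙 t ⊗ₘ C.φ₀.hom)
  hexagon : ∀ u v w : V,
    ((C.φ₂ u v).hom ⊗ₘ 𝟙 (C.obj w)) ≫ (C.φ₂ (u ⊗ v) w).hom ≫ C.map (α_ u v w).hom =
      (α_ (C.obj u) (C.obj v) (C.obj w)).hom ≫ (𝟙 (C.obj u) ⊗ₘ (C.φ₂ v w).hom) ≫
        (C.φ₂ u (v ⊗ w)).hom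
  φ₀_left : ∀ v : V,
    (C.φ₀.hom ⊗ₘ 𝟙 (C.obj v)) ≫ (C.φ₂ (𝟙_ V) v).hom ≫ C.map (λ_ v).hom =
      (λ_ (C.obj v)).hom
  φ₀_right : ∀ v : V,
    (𝟙 (C.obj v) ⊗ₘ C.φ₀.hom) ≫ (C.φ₂ v (𝟙_ V)).hom ≫ C.map (ρ_ v).hom =
      (ρ_ (C.obj v)).hom
  braided : ∀ v w : V,
    (C.φ₂ v w).hom ≫ C.map (β_ v w).hom =
      (C.halfBraiding v (C.obj w)).hom ≫ (C.φ₂ w v).hom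

/-- The data of a morphism of pairs `(T, C) ⟶ (T', C')`. -/
structure PairHomData (C : CentralData V T) (C' : CentralData V T') where
  G : T ⥤ T'
  φ₂ : ∀ x y : T, G.obj x ⊗ G.obj y ≅ G.obj (x ⊗ y)
  φ₀ : 𝟙_ T' ≅ G.obj (𝟙_ T)
  γ : ∀ v : V, C'.obj v ≅ G.obj (C.obj v)

/-- The axioms of a morphism of pairs: `(G, φ₂, φ₀)` is a (strong) monoidal functor and
`γ : F' ⟹ G ∘ F` is a monoidal natural isomorphism compatible with the half-braidings. -/
structure PairHomData.IsPairHom {C : CentralData V T} {C' : CentralData V T'}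
    (D : PairHomData C C') : Prop where
  φ₂_natural : ∀ {x x' y y' : T} (f : x ⟶ x') (g : y ⟶ y'),
    (D.G.map f ⊗ₘ D.G.map g) ≫ (D.φ₂ x' y').hom = (D.φ₂ x y).hom ≫ D.G.map (f ⊗ₘ g)
  hexagon : ∀ x y z : T,
    ((D.φ₂ x y).hom ⊗ₘ 𝟙 (D.G.obj z)) ≫ (D.φ₂ (x ⊗ y) z).hom ≫ D.G.map (α_ x y z).hom =
      (α_ (D.G.obj x) (D.G.obj y) (D.G.obj z)).hom ≫ (𝟙 (D.G.obj x) ⊗ₘ (D.φ₂ y z).hom) ≫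
        (D.φ₂ x (y ⊗ z)).hom
  φ₀_left : ∀ x : T,
    (D.φ₀.hom ⊗ₘ 𝟙 (D.G.obj x)) ≫ (D.φ₂ (𝟙_ T) x).hom ≫ D.G.map (λ_ x).hom =
      (λ_ (D.G.obj x)).hom
  φ₀_right : ∀ x : T,
    (𝟙 (D.G.obj x) ⊗ₘ D.φ₀.hom) ≫ (D.φ₂ x (𝟙_ T)).hom ≫ D.G.map (ρ_ x).hom =
      (ρ_ (D.G.obj x)).hom
  γ_natural : ∀ {v w : V} (f : v ⟶ w),
    C'.map f ≫ (D.γ w).hom = (D.γ v).hom ≫ D.G.map (C.map f)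
  γ_tensor : ∀ v w : V,
    (C'.φ₂ v w).hom ≫ (D.γ (v ⊗ w)).hom =
      ((D.γ v).hom ⊗ₘ (D.γ w).hom) ≫ (D.φ₂ (C.obj v) (C.obj w)).hom ≫
        D.G.map (C.φ₂ v w).hom
  γ_unit : C'.φ₀.hom ≫ (D.γ (𝟙_ V)).hom = D.φ₀.hom ≫ D.G.map C.φ₀.hom
  γ_braiding : ∀ (v : V) (t : T),
    ((D.γ v).hom ⊗ₘ 𝟙 (D.G.obj t)) ≫ (D.φ₂ (C.obj v) t).hom ≫
        D.G.map (C.halfBraiding v t).hom =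
      (C'.halfBraiding v (D.G.obj t)).hom ≫ (𝟙 (D.G.obj t) ⊗ₘ (D.γ v).hom) ≫
        (D.φ₂ t (C.obj v)).hom

/-- The identity morphism of pairs. -/
def PairHomData.id (C : CentralData V T) : PairHomData C C :=
  ⟨𝟭 T, fun x y => Iso.refl (x ⊗ y), Iso.refl (𝟙_ T), fun v => Iso.refl (C.obj v)⟩

/-- Composition of morphisms of pairs. -/
def PairHomData.comp {T'' : Type u₄} [Category.{v₄} T''] [MonoidalCategory T'']
    {C : CentralData V T} {C' : CentralData V T'} {C'' : CentralData V T''}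
    (D : PairHomData C C') (E : PairHomData C' C'') : PairHomData C C'' :=
  ⟨D.G ⋙ E.G,
    fun x y => E.φ₂ (D.G.obj x) (D.G.obj y) ≪≫ E.G.mapIso (D.φ₂ x y),
    E.φ₀ ≪≫ E.G.mapIso D.φ₀,
    fun v => E.γ v ≪≫ E.G.mapIso (D.γ v)⟩

/-- 2-morphisms of pairs. -/
def IsPair2Mor {C : CentralData V T} {C' : CentralData V T'}
    (D E : PairHomData C C') (τ : D.G ⟶ E.G) : Prop :=
  (∀ x y : T, (D.φ₂ x y).hom ≫ τ.app (x ⊗ y) = (τ.app x ⊗ₘ τ.app y) ≫ (E.φ₂ x y).hom) ∧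
    (D.φ₀.hom ≫ τ.app (𝟙_ T) = E.φ₀.hom) ∧
    ∀ v : V, (D.γ v).hom ≫ τ.app (C.obj v) = (E.γ v).hom

/-- `D` is an equivalence of pairs. -/
def PairHomData.IsEquiv {C : CentralData V T} {C' : CentralData V T'}
    (D : PairHomData C C') : Prop :=
  ∃ E : PairHomData C' C, E.IsPairHom ∧
    ∃ (η : (PairHomData.id C).G ≅ (PairHomData.comp D E).G)
      (ε : (PairHomData.comp E D).G ≅ (PairHomData.id C').G),
      IsPair2Mor (PairHomData.id C) (PairHomData.comp D E) η.hom ∧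
        IsPair2Mor (PairHomData.comp E D) (PairHomData.id C') ε.hom

end Central

end ModMonPaper
/-! ### The 2-functor `Ψ` and the pair associated to a module monoidal category -/

namespace ModMonPaper

section Psi

variable {V : Type u₁} [Category.{v₁} V] [MonoidalCategory V] [BraidedCategory V]
variable {T : Type u₂} [Category.{v₂} T] [MonoidalCategory T]
variable {T' : Type u₃} [Category.{v₃} T'] [MonoidalCategory T']

/-- `Ψ` on objects: the unital module monoidal structure induced by a pair. -/
def PsiData (C : CentralData V T) : ModMonData V T where
  act v x := C.obj v ⊗ x
  actMap f g := C.map f ⊗ₘ g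
  massoc v w x := tensorIso (C.φ₂ v w).symm (Iso.refl x) ≪≫ α_ (C.obj v) (C.obj w) x
  munit x := tensorIso C.φ₀.symm (Iso.refl x) ≪≫ λ_ x
  α₁ v x y := α_ (C.obj v) x y
  α₂ v x y := (α_ x (C.obj v) y).symm ≪≫
    tensorIso (C.halfBraiding v x).symm (Iso.refl y) ≪≫ α_ (C.obj v) x y

theorem psiData_actMap_id (C : CentralData V T) (hC : C.IsCentral) (v : V) (x : T) :
    (PsiData C).actMap (𝟙 v) (𝟙 x) = 𝟙 ((PsiData C).act v x) := by
  show C.map (𝟙 v) ⊗ₘ 𝟙 x = 𝟙 (C.obj v ⊗ x)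
  rw [hC.map_id, id_tensorHom_id]

theorem psiData_actMap_comp (C : CentralData V T) (hC : C.IsCentral)
    {v w u : V} {x y z : T} (f : v ⟶ w) (g : w ⟶ u) (h : x ⟶ y) (k : y ⟶ z) :
    (PsiData C).actMap (f ≫ g) (h ≫ k) =
      (PsiData C).actMap f h ≫ (PsiData C).actMap g k := by
  show C.map (f ≫ g) ⊗ₘ (h ≫ k) = (C.map f ⊗ₘ h) ≫ (C.map g ⊗ₘ k)
  rw [hC.map_comp, ← tensorHom_comp_tensorHom]

/-- `Ψ` on 1-morphisms: the unital module monoidal functor induced by a morphism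
of pairs. -/
def PsiHom {C : CentralData V T} {C' : CentralData V T'} (D : PairHomData C C') :
    UMMFunctorData (PsiData C) (PsiData C') where
  F := D.G
  φ₂ := D.φ₂
  φ₀ := D.φ₀
  s v x := tensorIso (D.γ v) (Iso.refl (D.G.obj x)) ≪≫ D.φ₂ (C.obj v) x

variable {M : Type u₂} [Category.{v₂} M] [MonoidalCategory M]

/-- The pair associated to a unital module monoidal category:
`F v := v ▷ 𝟙`, with the half-braiding, `φ₂` and `φ₀` of the paper. -/
def pairOfModMon (P : ModMonData V M)
    (hid : ∀ (v : V) (x : M), P.actMap (𝟙 v) (𝟙 x) = 𝟙 (P.act v x))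
    (hcomp : ∀ {v w u : V} {x y z : M} (f : v ⟶ w) (g : w ⟶ u) (h : x ⟶ y) (k : y ⟶ z),
      P.actMap (f ≫ g) (h ≫ k) = P.actMap f h ≫ P.actMap g k) :
    CentralData V M where
  obj v := P.act v (𝟙_ M)
  map f := P.actMap f (𝟙 (𝟙_ M))
  halfBraiding v t := P.α₁ v (𝟙_ M) t ≪≫
    P.toModuleData.actIso hid hcomp v (λ_ t ≪≫ (ρ_ t).symm) ≪≫ (P.α₂ v t (𝟙_ M)).symm
  φ₂ v w := P.α₁ v (𝟙_ M) (P.act w (𝟙_ M)) ≪≫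
    P.toModuleData.actIso hid hcomp v (P.α₂ w (𝟙_ M) (𝟙_ M)) ≪≫
      (P.massoc v w (𝟙_ M ⊗ 𝟙_ M)).symm ≪≫
        P.toModuleData.actIso hid hcomp (v ⊗ w) (ρ_ (𝟙_ M))
  φ₀ := (P.munit (𝟙_ M)).symm

end Psi

end ModMonPaper

namespace ModMonPaper

namespace CentralData.IsCentral

variable {V : Type u₁} [Category.{v₁} V] [MonoidalCategory V] [BraidedCategory V]
variable {T : Type u₂} [Category.{v₂} T] [MonoidalCategory T]
variable {C : CentralData V T} (hC : C.IsCentral)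
include hC

theorem halfBraiding_hom_naturality {v w : V} {x y : T} (f : v ⟶ w) (g : x ⟶ y) :
    (C.map f ⊗ₘ g) ≫ (C.halfBraiding w y).hom = (C.halfBraiding v x).hom ≫ (g ⊗ₘ C.map f) := by
  have natural_right := hC.halfBraiding_natural w g
  have natural_left := hC.map_central f x
  simp only [id_tensorHom, tensorHom_id] at natural_right natural_left
  rw [MonoidalCategory.tensorHom_def, assoc, natural_right, ← assoc, natural_left, assoc,
    MonoidalCategory.tensorHom_def', whisker_exchange]

theorem halfBraiding_inv_naturality {v w : V} {x y : T} (f : v ⟶ w) (g : x ⟶ y) :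
    (g ⊗ₘ C.map f) ≫ (C.halfBraiding w y).inv = (C.halfBraiding v x).inv ≫ (C.map f ⊗ₘ g) := by
  rw [Iso.comp_inv_eq, assoc, hC.halfBraiding_hom_naturality, Iso.inv_hom_id_assoc]

theorem halfBraiding_inv_tensor (v : V) (l m : T) :
    (C.halfBraiding v (l ⊗ m)).inv =
      (α_ l m (C.obj v)).hom ≫ l ◁ (C.halfBraiding v m).inv ≫ (α_ l (C.obj v) m).inv ≫
        (C.halfBraiding v l).inv ▷ m ≫ (α_ (C.obj v) l m).hom := by
  have hex := hC.halfBraiding_hex v l m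
  simp only [id_tensorHom, tensorHom_id] at hex
  apply Iso.inv_ext
  rw [← cancel_epi (α_ (C.obj v) l m).hom]
  simp only [reassoc_of% hex]
  simp

theorem halfBraiding_inv_φ₂ (v w : V) (t : T) :
    (C.halfBraiding (v ⊗ w) t).inv =
      t ◁ (C.φ₂ v w).inv ≫ (α_ t (C.obj v) (C.obj w)).inv ≫
        (C.halfBraiding v t).inv ▷ C.obj w ≫ (α_ (C.obj v) t (C.obj w)).hom ≫
          C.obj v ◁ (C.halfBraiding w t).inv ≫ (α_ (C.obj v) (C.obj w) t).inv ≫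
            (C.φ₂ v w).hom ▷ t := by
  have central := hC.φ₂_central v w t
  simp only [id_tensorHom, tensorHom_id] at central
  apply Iso.inv_ext
  rw [← cancel_epi ((C.φ₂ v w).hom ▷ t)]
  simp only [reassoc_of% central]
  simp

theorem φ₂_inv_naturality {v v' w w' : V} (f : v ⟶ v') (g : w ⟶ w') :
    C.map (f ⊗ₘ g) ≫ (C.φ₂ v' w').inv = (C.φ₂ v w).inv ≫ (C.map f ⊗ₘ C.map g) := by
  rw [Iso.comp_inv_eq, assoc, hC.φ₂_natural, Iso.inv_hom_id_assoc]

theorem map_associator_hom (u v w : V) :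
    C.map (α_ u v w).hom =
      (C.φ₂ (u ⊗ v) w).inv ≫ (C.φ₂ u v).inv ▷ C.obj w ≫ (α_ (C.obj u) (C.obj v) (C.obj w)).hom ≫
        C.obj u ◁ (C.φ₂ v w).hom ≫ (C.φ₂ u (v ⊗ w)).hom := by
  have hexagon := hC.hexagon u v w
  simp only [id_tensorHom, tensorHom_id] at hexagon
  rw [← hexagon]
  simp

theorem map_rightUnitor_hom (v : V) :
    C.map (ρ_ v).hom = (C.φ₂ v (𝟙_ V)).inv ≫ C.obj v ◁ C.φ₀.inv ≫ (ρ_ (C.obj v)).hom := by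
  have unit_right := hC.φ₀_right v
  simp only [id_tensorHom] at unit_right
  rw [← unit_right]
  simp

theorem map_braiding_hom (v w : V) :
    C.map (β_ v w).hom = (C.φ₂ v w).inv ≫ (C.halfBraiding v (C.obj w)).hom ≫ (C.φ₂ w v).hom := by
  rw [← cancel_epi (C.φ₂ v w).hom, hC.braided, Iso.hom_inv_id_assoc]

end CentralData.IsCentral

section PsiAxioms

variable {V : Type u₁} [Category.{v₁} V] [MonoidalCategory V] [BraidedCategory V]
variable {T : Type u₂} [Category.{v₂} T] [MonoidalCategory T]
variable {C : CentralData V T} (hC : C.IsCentral)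
include hC

theorem psiData_isModule : (PsiData C).toModuleData.IsModule where
  actMap_id := psiData_actMap_id C hC
  actMap_comp := psiData_actMap_comp C hC
  massoc_natural {v v' w w' x x'} f g h := by
    have square : (C.map (f ⊗ₘ g) ⊗ₘ h) ≫ ((C.φ₂ v' w').inv ⊗ₘ 𝟙 x') =
        ((C.φ₂ v w).inv ⊗ₘ 𝟙 x) ≫ ((C.map f ⊗ₘ C.map g) ⊗ₘ h) := by
      rw [tensorHom_comp_tensorHom, tensorHom_comp_tensorHom, hC.φ₂_inv_naturality, comp_id,
        id_comp]
    dsimp only [PsiData, tensorIso, Iso.trans_hom, Iso.symm_hom, Iso.refl_hom]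
    rw [reassoc_of% square, assoc, associator_naturality]
  munit_natural h := by simp [PsiData, hC.map_id, whisker_exchange_assoc]
  pentagon u v w x := by simp [PsiData, hC.map_id, hC.map_associator_hom]
  triangle v x := by simp [PsiData, hC.map_id, hC.map_rightUnitor_hom]

theorem psiData_α₂_natural {v v' : V} {x x' y y' : T} (f : v ⟶ v') (g : x ⟶ x') (h : y ⟶ y') :
    (g ⊗ₘ (PsiData C).actMap f h) ≫ ((PsiData C).α₂ v' x' y').hom =
      ((PsiData C).α₂ v x y).hom ≫ (PsiData C).actMap f (g ⊗ₘ h) := by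
  have square : ((g ⊗ₘ C.map f) ⊗ₘ h) ≫ ((C.halfBraiding v' x').inv ⊗ₘ 𝟙 y') =
      ((C.halfBraiding v x).inv ⊗ₘ 𝟙 y) ≫ ((C.map f ⊗ₘ g) ⊗ₘ h) := by
    rw [tensorHom_comp_tensorHom, tensorHom_comp_tensorHom, hC.halfBraiding_inv_naturality,
      comp_id, id_comp]
  dsimp only [PsiData, tensorIso, Iso.trans_hom, Iso.symm_hom, Iso.refl_hom]
  rw [associator_inv_naturality_assoc, reassoc_of% square, associator_naturality, assoc, assoc]

end PsiAxioms

end ModMonPaper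

namespace ModMonPaper

section Stmt11

variable {V : Type u₁} [Category.{v₁} V] [MonoidalCategory V] [BraidedCategory V]
variable {T : Type u₂} [Category.{v₂} T] [MonoidalCategory T]

/-- Given a pair `(T, F)` over `V`, the category `T` with its given
unital monoidal structure, the action `v ▷ m := F v ⊗ m`, module associativity
`m := a ∘ (φ₂⁻¹ ⊗ id)`, module unit `l^▷ := l ∘ (φ₀⁻¹ ⊗ id)`, `α¹ := a` and
`α² := a ∘ (β⁻¹ ⊗ id) ∘ a⁻¹`, is a unital module monoidal category over `V`. -/
theorem psiData_isModMon (C : CentralData V T) (hC : C.IsCentral) :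
    (PsiData C).IsModMon := by
  constructor
  case toIsModule => exact psiData_isModule hC
  case α₁_natural => exact fun f g h => associator_naturality (C.map f) g h
  case α₂_natural => exact psiData_α₂_natural hC
  case α₁_assoc | α₁_massoc | α₁_α₂ => intros; simp [PsiData, hC.map_id]
  case α₂_assoc => intros; simp [PsiData, hC.map_id, hC.halfBraiding_inv_tensor]
  case α₂_massoc => intros; simp [PsiData, hC.map_id, hC.halfBraiding_inv_φ₂]
  case braiding_act =>
    intros; simp [PsiData, hC.map_id, hC.map_braiding_hom, hC.halfBraiding_inv_tensor]

end Stmt11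

end ModMonPaper
end

section
/- Let (G,φ₂,φ₀,γ) : (T,F) → (T',F') be a morphism of pairs over a braided monoidal category V. Then (G,φ₂,φ₀,s^{Ψ(G)}) with s^{Ψ(G)}_{v,m} := φ₂_{F(v),m}∘(γ_v⊗'id_{G(m)}) is a unital module monoidal functor Ψ(T,F) → Ψ(T',F'), where Ψ(T,F) and Ψ(T',F') carry the module monoidal structures induced by F and F'. -/
open CategoryTheory MonoidalCategory Category

universe v₁ v₂ v₃ v₄ u₁ u₂ u₃ u₄

/-!
Write `s v m = (γ v ▷ G m) ≫ φ₂ (F v) m`. Each axiom of `s` splits into a statement about `γ`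
followed by one about `(G, φ₂, φ₀)`: the module pentagon and triangle come from the monoidality of
`γ` together with the hexagon and left unit axiom of `G`, `compα₁` is the hexagon of `G` alone,
and `compα₂` reduces to `compα₁`: the inverse hexagon of `G` exposes `G` applied to the inverse
half-braiding of `F v`, and the compatibility of `γ` with the half-braidings trades it for the
inverse half-braiding of `F' v`.
-/

namespace ModMonPaper

section

variable {T : Type u₂} [Category.{v₂} T] [MonoidalCategory T]
variable {T' : Type u₃} [Category.{v₃} T'] [MonoidalCategory T']

namespace MonFunctorData.IsMonFunctor

variable {D : MonFunctorData T T'}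

theorem φ₂_natural_left (hD : D.IsMonFunctor) {x x' : T} (f : x ⟶ x') (y : T) :
    D.F.map f ▷ D.F.obj y ≫ (D.φ₂ x' y).hom = (D.φ₂ x y).hom ≫ D.F.map (f ▷ y) := by
  have h := hD.φ₂_natural f (𝟙 y)
  rwa [D.F.map_id, tensorHom_id, tensorHom_id] at h

theorem hexagon_whisker (hD : D.IsMonFunctor) (x y z : T) :
    (D.φ₂ x y).hom ▷ D.F.obj z ≫ (D.φ₂ (x ⊗ y) z).hom ≫ D.F.map (α_ x y z).hom =
      (α_ (D.F.obj x) (D.F.obj y) (D.F.obj z)).hom ≫ D.F.obj x ◁ (D.φ₂ y z).hom ≫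
        (D.φ₂ x (y ⊗ z)).hom := by
  simpa only [tensorHom_id, id_tensorHom] using hD.hexagon x y z

theorem hexagon_inv (hD : D.IsMonFunctor) (x y z : T) :
    D.F.obj x ◁ (D.φ₂ y z).hom ≫ (D.φ₂ x (y ⊗ z)).hom ≫ D.F.map (α_ x y z).inv =
      (α_ (D.F.obj x) (D.F.obj y) (D.F.obj z)).inv ≫ (D.φ₂ x y).hom ▷ D.F.obj z ≫
        (D.φ₂ (x ⊗ y) z).hom := by
  rw [← Functor.mapIso_inv, ← assoc, Iso.comp_inv_eq, Functor.mapIso_hom, assoc, assoc,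
    Iso.eq_inv_comp]
  exact (hD.hexagon_whisker x y z).symm

theorem φ₀_left_whisker (hD : D.IsMonFunctor) (x : T) :
    D.φ₀.hom ▷ D.F.obj x ≫ (D.φ₂ (𝟙_ T) x).hom ≫ D.F.map (λ_ x).hom = (λ_ (D.F.obj x)).hom := by
  simpa only [tensorHom_id] using hD.φ₀_left x

end MonFunctorData.IsMonFunctor

variable {V : Type u₁} [Category.{v₁} V] [MonoidalCategory V]
variable {C : CentralData V T} {C' : CentralData V T'}

namespace PairHomData

abbrev toMonFunctorData (D : PairHomData C C') : MonFunctorData T T' :=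
  ⟨D.G, D.φ₂, D.φ₀⟩

namespace IsPairHom

variable {D : PairHomData C C'}

theorem isMonFunctor (hD : D.IsPairHom) : D.toMonFunctorData.IsMonFunctor :=
  ⟨hD.φ₂_natural, hD.hexagon, hD.φ₀_left, hD.φ₀_right⟩

theorem γ_comp_map_φ₂_inv (hD : D.IsPairHom) (v w : V) :
    (D.γ (v ⊗ w)).hom ≫ D.G.map (C.φ₂ v w).inv =
      (C'.φ₂ v w).inv ≫ ((D.γ v).hom ⊗ₘ (D.γ w).hom) ≫ (D.φ₂ (C.obj v) (C.obj w)).hom := by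
  rw [← Functor.mapIso_inv, Iso.comp_inv_eq, Functor.mapIso_hom, assoc, Iso.eq_inv_comp, assoc]
  exact hD.γ_tensor v w

theorem γ_comp_map_φ₀_inv (hD : D.IsPairHom) :
    (D.γ (𝟙_ V)).hom ≫ D.G.map C.φ₀.inv = C'.φ₀.inv ≫ D.φ₀.hom := by
  rw [← Functor.mapIso_inv, Iso.comp_inv_eq, Functor.mapIso_hom, assoc, Iso.eq_inv_comp]
  exact hD.γ_unit

theorem γ_braiding_inv (hD : D.IsPairHom) (v : V) (t : T) :
    D.G.obj t ◁ (D.γ v).hom ≫ (D.φ₂ t (C.obj v)).hom ≫ D.G.map (C.halfBraiding v t).inv =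
      (C'.halfBraiding v (D.G.obj t)).inv ≫ (D.γ v).hom ▷ D.G.obj t ≫
        (D.φ₂ (C.obj v) t).hom := by
  rw [← Functor.mapIso_inv, ← assoc, Iso.comp_inv_eq, Functor.mapIso_hom, assoc, assoc,
    Iso.eq_inv_comp]
  simpa only [tensorHom_id, id_tensorHom] using (hD.γ_braiding v t).symm

end IsPairHom

end PairHomData

variable {D : PairHomData C C'}

theorem psiHom_s_natural (hD : D.IsPairHom) {v w : V} {x y : T} (f : v ⟶ w) (g : x ⟶ y) :
    (PsiData C').actMap f ((PsiHom D).F.map g) ≫ ((PsiHom D).s w y).hom =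
      ((PsiHom D).s v x).hom ≫ (PsiHom D).F.map ((PsiData C).actMap f g) := by
  dsimp only [PsiHom, PsiData]
  simp only [Iso.trans_hom, tensorIso_hom, Iso.refl_hom]
  rw [tensorHom_comp_tensorHom_assoc, hD.γ_natural, comp_id, ← id_comp (D.G.map g),
    ← tensorHom_comp_tensorHom, assoc, hD.φ₂_natural, assoc]

theorem psiHom_s_pentagon [BraidedCategory V] (hC' : C'.IsCentral) (hD : D.IsPairHom)
    (v w : V) (x : T) :
    ((PsiHom D).s (v ⊗ w) x).hom ≫ (PsiHom D).F.map ((PsiData C).massoc v w x).hom =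
      ((PsiData C').massoc v w ((PsiHom D).F.obj x)).hom ≫
        (PsiData C').actMap (𝟙 v) ((PsiHom D).s w x).hom ≫
          ((PsiHom D).s v ((PsiData C).act w x)).hom := by
  dsimp only [PsiHom, PsiData]
  simp only [Iso.trans_hom, tensorIso_hom, Iso.refl_hom, Iso.symm_hom, tensorHom_id, id_tensorHom,
    hC'.map_id, Functor.map_comp, assoc]
  rw [← reassoc_of% hD.isMonFunctor.φ₂_natural_left, ← comp_whiskerRight_assoc,
    hD.γ_comp_map_φ₂_inv, comp_whiskerRight, comp_whiskerRight, assoc, assoc,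
    hD.isMonFunctor.hexagon_whisker, MonoidalCategory.tensorHom_def', comp_whiskerRight, assoc,
    associator_naturality_left_assoc, associator_naturality_middle_assoc,
    ← whisker_exchange_assoc, whiskerLeft_comp, assoc]

theorem psiHom_s_triangle (hD : D.IsPairHom) (x : T) :
    ((PsiHom D).s (𝟙_ V) x).hom ≫ (PsiHom D).F.map ((PsiData C).munit x).hom =
      ((PsiData C').munit ((PsiHom D).F.obj x)).hom := by
  dsimp only [PsiHom, PsiData]
  simp only [Iso.trans_hom, tensorIso_hom, Iso.refl_hom, Iso.symm_hom, tensorHom_id,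
    Functor.map_comp, assoc]
  rw [← reassoc_of% hD.isMonFunctor.φ₂_natural_left, ← comp_whiskerRight_assoc,
    hD.γ_comp_map_φ₀_inv, comp_whiskerRight, assoc, hD.isMonFunctor.φ₀_left_whisker]

theorem psiHom_compα₁ [BraidedCategory V] (hC' : C'.IsCentral) (hD : D.IsPairHom)
    (v : V) (x y : T) :
    ((PsiData C').α₁ v ((PsiHom D).F.obj x) ((PsiHom D).F.obj y)).hom ≫
        (PsiData C').actMap (𝟙 v) ((PsiHom D).φ₂ x y).hom ≫ ((PsiHom D).s v (x ⊗ y)).hom =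
      (((PsiHom D).s v x).hom ⊗ₘ 𝟙 ((PsiHom D).F.obj y)) ≫
        ((PsiHom D).φ₂ ((PsiData C).act v x) y).hom ≫
          (PsiHom D).F.map ((PsiData C).α₁ v x y).hom := by
  dsimp only [PsiHom, PsiData]
  simp only [Iso.trans_hom, tensorIso_hom, Iso.refl_hom, tensorHom_id, id_tensorHom,
    hC'.map_id, comp_whiskerRight, assoc]
  rw [hD.isMonFunctor.hexagon_whisker, associator_naturality_left_assoc, ← whisker_exchange_assoc]

theorem psiHom_compα₂ [BraidedCategory V] (hC' : C'.IsCentral) (hD : D.IsPairHom)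
    (v : V) (x y : T) :
    ((PsiData C').α₂ v ((PsiHom D).F.obj x) ((PsiHom D).F.obj y)).hom ≫
        (PsiData C').actMap (𝟙 v) ((PsiHom D).φ₂ x y).hom ≫ ((PsiHom D).s v (x ⊗ y)).hom =
      (𝟙 ((PsiHom D).F.obj x) ⊗ₘ ((PsiHom D).s v y).hom) ≫
        ((PsiHom D).φ₂ x ((PsiData C).act v y)).hom ≫
          (PsiHom D).F.map ((PsiData C).α₂ v x y).hom := by
  have h₁ := psiHom_compα₁ hC' hD v x y
  dsimp only [PsiHom, PsiData] at h₁ ⊢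
  simp only [Iso.trans_hom, tensorIso_hom, Iso.refl_hom, Iso.symm_hom, tensorHom_id, id_tensorHom,
    hC'.map_id, Functor.map_comp, whiskerLeft_comp, assoc] at h₁ ⊢
  rw [reassoc_of% hD.isMonFunctor.hexagon_inv, ← reassoc_of% hD.isMonFunctor.φ₂_natural_left,
    associator_inv_naturality_middle_assoc, ← comp_whiskerRight_assoc,
    ← comp_whiskerRight_assoc, assoc, hD.γ_braiding_inv, comp_whiskerRight, assoc, ← h₁]

end

section Stmt12

variable {V : Type u₁} [Category.{v₁} V] [MonoidalCategory V] [BraidedCategory V]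
variable {T : Type u₂} [Category.{v₂} T] [MonoidalCategory T]
variable {T' : Type u₃} [Category.{v₃} T'] [MonoidalCategory T']

theorem psiHom_isUMMFunctor_general {C : CentralData V T} {C' : CentralData V T'}
    (hC' : C'.IsCentral)
    (D : PairHomData C C') (hD : D.IsPairHom) :
    (PsiHom D).IsUMMFunctor :=
  { φ₂_natural := hD.φ₂_natural
    hexagon := hD.hexagon
    φ₀_left := hD.φ₀_left
    φ₀_right := hD.φ₀_right
    s_natural := psiHom_s_natural hD
    s_pentagon := psiHom_s_pentagon hC' hD
    s_triangle := psiHom_s_triangle hD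
    compα₁ := psiHom_compα₁ hC' hD
    compα₂ := psiHom_compα₂ hC' hD }

/-- Given a morphism of pairs `(G, φ₂, φ₀, γ) : (T, F) ⟶ (T', F')`,
the data `(G, φ₂, φ₀, s)` with `s_{v,m} := φ₂ ∘ (γ_v ⊗' id)` is a unital module monoidal
functor `Ψ(T, F) ⟶ Ψ(T', F')`. -/
theorem psiHom_isUMMFunctor {C : CentralData V T} {C' : CentralData V T'}
    (hC : C.IsCentral) (hC' : C'.IsCentral)
    (D : PairHomData C C') (hD : D.IsPairHom) :
    (PsiHom D).IsUMMFunctor :=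
  psiHom_isUMMFunctor_general hC' D hD

end Stmt12

end ModMonPaper
end

section
/- Let G, G' : (T,F) → (T',F') be morphisms of pairs over a braided monoidal category V and let η : G ⇒ G' be a 2-morphism of pairs. Then η is a unital module monoidal natural transformation Ψ(G) ⇒ Ψ(G'); in particular η satisfies the module naturality square η_{F(v)⊗m}∘φ₂^G_{F(v),m}∘(γ^G_v⊗'id_{G(m)}) = φ₂^{G'}_{F(v),m}∘(γ^{G'}_v⊗'id_{G'(m)})∘(id_{F'(v)}⊗'η_m) for all v ∈ V and m ∈ T. -/
open CategoryTheory MonoidalCategory Category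

universe v₁ v₂ v₃ v₄ u₁ u₂ u₃ u₄

namespace ModMonPaper

section PsiHom

variable {V : Type u₁} [Category.{v₁} V] [MonoidalCategory V]
variable {T : Type u₂} [Category.{v₂} T] [MonoidalCategory T]
variable {T' : Type u₃} [Category.{v₃} T'] [MonoidalCategory T']

theorem psiHom_s_hom {C : CentralData V T} {C' : CentralData V T'} (D : PairHomData C C')
    (v : V) (x : T) :
    ((PsiHom D).s v x).hom = ((D.γ v).hom ⊗ₘ 𝟙 (D.G.obj x)) ≫ (D.φ₂ (C.obj v) x).hom :=
  rfl

namespace IsPair2Mor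

variable {C : CentralData V T} {C' : CentralData V T'} {D D' : PairHomData C C'}
  {η : D.G ⟶ D'.G}

theorem γ_tensor_comp_φ₂_comp_app (hη : IsPair2Mor D D' η) (v : V) (m : T) :
    ((D.γ v).hom ⊗ₘ 𝟙 (D.G.obj m)) ≫ (D.φ₂ (C.obj v) m).hom ≫ η.app (C.obj v ⊗ m) =
      (𝟙 (C'.obj v) ⊗ₘ η.app m) ≫ ((D'.γ v).hom ⊗ₘ 𝟙 (D'.G.obj m)) ≫
        (D'.φ₂ (C.obj v) m).hom := by
  obtain ⟨hφ₂, -, hγ⟩ := hη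
  calc ((D.γ v).hom ⊗ₘ 𝟙 (D.G.obj m)) ≫ (D.φ₂ (C.obj v) m).hom ≫ η.app (C.obj v ⊗ m)
      _ = ((D.γ v).hom ≫ η.app (C.obj v) ⊗ₘ η.app m) ≫ (D'.φ₂ (C.obj v) m).hom := by
        rw [hφ₂, tensorHom_comp_tensorHom_assoc, id_comp]
      _ = ((D'.γ v).hom ⊗ₘ η.app m) ≫ (D'.φ₂ (C.obj v) m).hom := by rw [hγ]
      _ = (𝟙 (C'.obj v) ⊗ₘ η.app m) ≫ ((D'.γ v).hom ⊗ₘ 𝟙 (D'.G.obj m)) ≫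
            (D'.φ₂ (C.obj v) m).hom := by
        rw [tensorHom_comp_tensorHom_assoc, id_comp, comp_id]

end IsPair2Mor

end PsiHom

section Pair2Mor

variable {V : Type u₁} [Category.{v₁} V] [MonoidalCategory V] [BraidedCategory V]
variable {T : Type u₂} [Category.{v₂} T] [MonoidalCategory T]
variable {T' : Type u₃} [Category.{v₃} T'] [MonoidalCategory T']

theorem psiData_actMap_id_left {C : CentralData V T} (hC : C.IsCentral) (v : V) {x y : T}
    (f : x ⟶ y) : (PsiData C).actMap (𝟙 v) f = 𝟙 (C.obj v) ⊗ₘ f := by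
  change C.map (𝟙 v) ⊗ₘ f = _
  rw [hC.map_id]

namespace IsPair2Mor

variable {C : CentralData V T} {C' : CentralData V T'} {D D' : PairHomData C C'}
  {η : D.G ⟶ D'.G}

theorem isUMMNT_psiHom (hC' : C'.IsCentral) (hη : IsPair2Mor D D' η) :
    IsUMMNT (PsiHom D) (PsiHom D') η :=
  ⟨hη.1, hη.2.1, fun v m => by
    rw [psiHom_s_hom, psiHom_s_hom, psiData_actMap_id_left hC']
    exact (assoc _ _ _).trans (hη.γ_tensor_comp_φ₂_comp_app v m)⟩

end IsPair2Mor

theorem psi_of_pair2Mor_general {C : CentralData V T} {C' : CentralData V T'}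
    (hC' : C'.IsCentral)
    (D D' : PairHomData C C')
    (η : D.G ⟶ D'.G) (hη : IsPair2Mor D D' η) :
    IsUMMNT (PsiHom D) (PsiHom D') η ∧
      ∀ (v : V) (m : T),
        ((D.γ v).hom ⊗ₘ 𝟙 (D.G.obj m)) ≫ (D.φ₂ (C.obj v) m).hom ≫ η.app (C.obj v ⊗ m) =
          (𝟙 (C'.obj v) ⊗ₘ η.app m) ≫ ((D'.γ v).hom ⊗ₘ 𝟙 (D'.G.obj m)) ≫
            (D'.φ₂ (C.obj v) m).hom :=
  ⟨hη.isUMMNT_psiHom hC', hη.γ_tensor_comp_φ₂_comp_app⟩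

/-- A 2-morphism of pairs `η : G ⟹ G'` is a unital module monoidal
natural transformation `Ψ(G) ⟹ Ψ(G')`; in particular it satisfies the module naturality
square for the induced module structures. -/
theorem psi_of_pair2Mor {C : CentralData V T} {C' : CentralData V T'}
    (hC : C.IsCentral) (hC' : C'.IsCentral)
    (D D' : PairHomData C C') (hD : D.IsPairHom) (hD' : D'.IsPairHom)
    (η : D.G ⟶ D'.G) (hη : IsPair2Mor D D' η) :
    IsUMMNT (PsiHom D) (PsiHom D') η ∧
      ∀ (v : V) (m : T),
        ((D.γ v).hom ⊗ₘ 𝟙 (D.G.obj m)) ≫ (D.φ₂ (C.obj v) m).hom ≫ η.app (C.obj v ⊗ m) =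
          (𝟙 (C'.obj v) ⊗ₘ η.app m) ≫ ((D'.γ v).hom ⊗ₘ 𝟙 (D'.G.obj m)) ≫
            (D'.φ₂ (C.obj v) m).hom :=
  psi_of_pair2Mor_general hC' D D' η hη

end Pair2Mor

end ModMonPaper
end
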